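/- arXiv:1502.06068 — 7 statements merged into one kernel-verified Lean document; each statement's English description precedes it below -/
import Mathlib

section
/- For every natural number n ≥ 0, the number of straight ménage permutations in S_n (permutations π of {1,...,n} with π(i) ≠ i and π(i) ≠ i+1 for all i) equals ∑_{k=0}^{n} (-1)^k · C(2n-k, k) · (n-k)!. -/
open Finset

/-- A straight ménage permutation of `{1,...,n}` (modeled on `Fin n`):
`π i ≠ i` and `π i ≠ i + 1` for all `i`. -/
def IsStraightMenage {n : ℕ} (π : Equiv.Perm (Fin n)) : Prop :=
  ∀ i : Fin n, π i ≠ i ∧ (π i : ℕ) ≠ (i : ℕ) + 1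

instance {n : ℕ} (π : Equiv.Perm (Fin n)) : Decidable (IsStraightMenage π) := by
  unfold IsStraightMenage; infer_instance

/-!
Rook-theoretic inclusion–exclusion. The forbidden cells `(i, i)` and `(i, i + 1)` form a staircase
of `2n - 1` cells, and inclusion–exclusion over sets `J` of forbidden cells gives
`∑_J (-1)^|J| N(J)`, where `N(J)` counts the permutations through every cell of `J`: this is
`(n - |J|)!` if no two cells of `J` share a row or a column, and `0` otherwise. Numbering the
staircase so that two cells attack each other exactly when their numbers are consecutive, the
non-attacking `k`-sets become the `k`-subsets of `{0, …, 2n - 2}` without two consecutive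
elements, of which there are `C(2n - k, k)`.
-/

open Equiv
open scoped Nat

section PermExtension

variable {α ι : Type*}

theorem exists_perm_forall_apply_eq [Finite α] {S : Finset ι} {r s : ι → α}
    (hr : Set.InjOn r S) (hs : Set.InjOn s S) : ∃ σ : Perm α, ∀ i ∈ S, σ (r i) = s i := by
  classical
  let e := (Equiv.Set.imageOfInjOn r S hr).symm.trans (Equiv.Set.imageOfInjOn s S hs)
  refine ⟨e.extendSubtype, fun i hi => ?_⟩
  have : (Equiv.Set.imageOfInjOn r S hr).symm ⟨r i, i, hi, rfl⟩ = ⟨i, hi⟩ :=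
    (Equiv.symm_apply_eq _).2 rfl
  rw [e.extendSubtype_apply_of_mem _ ⟨i, hi, rfl⟩, Equiv.trans_apply, this]
  rfl

variable [Fintype α] [DecidableEq α]

theorem card_perm_forall_apply_eq_self (A : Finset α) :
    #{ρ : Perm α | ∀ a ∈ A, ρ a = a} = (Fintype.card α - #A)! := by
  rw [← Fintype.card_subtype, ← Finset.card_compl, ← Fintype.card_coe, ← Fintype.card_perm]
  refine Fintype.card_congr ((Equiv.subtypeEquivRight fun ρ => ?_).trans
    (Perm.subtypeEquivSubtypePerm (· ∈ Aᶜ)).symm)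
  simp

theorem card_perm_forall_apply_eq {S : Finset ι} {r s : ι → α}
    (hr : Set.InjOn r S) (hs : Set.InjOn s S) :
    #{π : Perm α | ∀ i ∈ S, π (r i) = s i} = (Fintype.card α - #S)! := by
  obtain ⟨σ, hσ⟩ := exists_perm_forall_apply_eq hr hs
  rw [← card_image_of_injOn hr, ← card_perm_forall_apply_eq_self]
  refine card_nbij' (σ⁻¹ * ·) (σ * ·) ?_ ?_ ?_ ?_
  · intro π hπ
    simp only [coe_filter, Set.mem_ofPred_eq, mem_univ, true_and, forall_mem_image] at hπ ⊢
    intro i hi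
    simp [hπ i hi, ← hσ i hi]
  · intro ρ hρ
    simp only [coe_filter, Set.mem_ofPred_eq, mem_univ, true_and, forall_mem_image] at hρ ⊢
    intro i hi
    simp [hρ hi, hσ i hi]
  · intro π _
    simp
  · intro ρ _
    simp

end PermExtension

theorem sum_powerset_ite_eq_sum_range {α M : Type*} [AddCommMonoid M] (s : Finset α)
    (p : Finset α → Prop) [DecidablePred p] (f : ℕ → M) :
    ∑ t ∈ s.powerset, (if p t then f #t else 0) =
      ∑ k ∈ range (#s + 1), #{t ∈ powersetCard k s | p t} • f k := by
  rw [← sum_fiberwise_of_maps_to (g := card) (t := range (#s + 1)) fun t ht =>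
    mem_range.2 (Nat.lt_succ_of_le (card_le_card (mem_powerset.1 ht)))]
  refine sum_congr rfl fun k _ => ?_
  rw [← powersetCard_eq_filter, ← sum_filter,
    sum_congr rfl fun t ht => by rw [(mem_powersetCard.1 (mem_filter.1 ht).1).2], sum_const]

def NoTwoConsecutive (T : Finset ℕ) : Prop := ∀ a ∈ T, a + 1 ∉ T

instance : DecidablePred NoTwoConsecutive := fun T => by
  unfold NoTwoConsecutive; infer_instance

theorem filter_noTwoConsecutive_notMem_range_succ (m k : ℕ) :
    {T ∈ powersetCard k (range (m + 1)) | NoTwoConsecutive T ∧ m ∉ T} =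
      {T ∈ powersetCard k (range m) | NoTwoConsecutive T} := by
  ext T
  simp only [mem_filter, mem_powersetCard, range_add_one]
  constructor
  · rintro ⟨⟨hT, hk⟩, hT', hm⟩
    exact ⟨⟨(subset_insert_iff_of_notMem hm).1 hT, hk⟩, hT'⟩
  · rintro ⟨⟨hT, hk⟩, hT'⟩
    exact ⟨⟨hT.trans (subset_insert _ _), hk⟩, hT', fun hm => by simpa using hT hm⟩

-- The truncated `m - 1` is harmless: for `m = 0` both sides are `1` if `k = 0` and `0` otherwise.
theorem card_filter_noTwoConsecutive_mem_range_succ (m k : ℕ) :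
    #{T ∈ powersetCard (k + 1) (range (m + 1)) | NoTwoConsecutive T ∧ m ∈ T} =
      #{T ∈ powersetCard k (range (m - 1)) | NoTwoConsecutive T} := by
  refine card_nbij' (·.erase m) (insert m ·) ?_ ?_ ?_ ?_
  · intro T hT
    simp only [coe_filter, mem_powersetCard, Set.mem_ofPred_eq, subset_iff, mem_range] at hT ⊢
    obtain ⟨⟨hTm, hk⟩, hT, hm⟩ := hT
    refine ⟨⟨fun a ha => ?_, by rw [card_erase_of_mem hm, hk]; rfl⟩,
      fun a ha ha' => hT a (mem_of_mem_erase ha) (mem_of_mem_erase ha')⟩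
    have hma : a ≠ m := ne_of_mem_erase ha
    have ha1 : a + 1 ≠ m := fun h => hT a (mem_of_mem_erase ha) (h ▸ hm)
    have := hTm (mem_of_mem_erase ha)
    omega
  · intro T hT
    simp only [coe_filter, mem_powersetCard, Set.mem_ofPred_eq, subset_iff, mem_range] at hT ⊢
    obtain ⟨⟨hTm, hk⟩, hT⟩ := hT
    have hm : m ∉ T := fun h => by have := hTm h; omega
    refine ⟨⟨fun a ha => ?_, by rw [card_insert_of_notMem hm, hk]⟩, fun a ha ha' => ?_,
      mem_insert_self _ _⟩
    · rcases mem_insert.1 ha with rfl | ha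
      · omega
      · have := hTm ha; omega
    · rcases mem_insert.1 ha with rfl | ha <;> rcases mem_insert.1 ha' with h | ha'
      · omega
      · have := hTm ha'; omega
      · have := hTm ha; omega
      · exact hT a ha ha'
  · intro T hT
    exact insert_erase (mem_filter.1 hT).2.2
  · intro T hT
    refine erase_insert fun hm => ?_
    have := mem_range.1 ((mem_powersetCard.1 (mem_filter.1 hT).1).1 hm)
    omega

theorem card_filter_noTwoConsecutive (m k : ℕ) :
    #{T ∈ powersetCard k (range m) | NoTwoConsecutive T} = (m + 1 - k).choose k := by
  induction m using Nat.strong_induction_on generalizing k with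
  | _ m ih =>
  rcases k with _ | k
  · simp [NoTwoConsecutive, filter_singleton]
  rcases m with _ | m
  · simp
  rw [← card_filter_add_card_filter_not (m ∈ ·), filter_filter, filter_filter,
    card_filter_noTwoConsecutive_mem_range_succ, filter_noTwoConsecutive_notMem_range_succ,
    ih m (by omega), ih (m - 1) (by omega)]
  rcases m with _ | j
  · rcases k with _ | k <;> simp
  · obtain hk | hk := le_or_gt k (j + 1)
    · rw [show j + 1 + 1 + 1 - (k + 1) = (j + 1 - k) + 1 by omega, Nat.choose_succ_succ',
        show j + 1 + 1 - (k + 1) = j + 1 - k by omega, show j + 1 - 1 + 1 - k = j + 1 - k by omega,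
        add_comm]
    · rw [Nat.choose_eq_zero_of_lt (by omega), Nat.choose_eq_zero_of_lt (by omega),
        Nat.choose_eq_zero_of_lt (by omega)]

theorem card_filter_noTwoConsecutive_fin (m k : ℕ) :
    #{J ∈ powersetCard k (univ : Finset (Fin m)) | NoTwoConsecutive (J.map Fin.valEmbedding)} =
      (m + 1 - k).choose k := by
  rw [← card_filter_noTwoConsecutive, ← Nat.Iio_eq_range, ← Fin.map_valEmbedding_univ,
    powersetCard_map, filter_map, card_map]
  rfl

theorem noTwoConsecutive_map_valEmbedding_iff {m : ℕ} (J : Finset (Fin m)) :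
    NoTwoConsecutive (J.map Fin.valEmbedding) ↔ ∀ a ∈ J, ∀ b ∈ J, (b : ℕ) ≠ a + 1 := by
  simp [NoTwoConsecutive]

/-- Cells `(i, i)` and `(i, i + 1)` of the forbidden board are numbered `2 i` and `2 i + 1`, so two
cells share a row or a column exactly when their numbers are consecutive. -/
def menageCell (n : ℕ) (j : Fin (2 * n - 1)) : Fin n × Fin n :=
  (⟨(j : ℕ) / 2, by omega⟩, ⟨((j : ℕ) + 1) / 2, by omega⟩)

theorem isStraightMenage_iff_forall_menageCell {n : ℕ} (π : Perm (Fin n)) :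
    IsStraightMenage π ↔ ∀ j, π (menageCell n j).1 ≠ (menageCell n j).2 := by
  simp only [IsStraightMenage, menageCell, ne_eq, Fin.ext_iff]
  constructor
  · intro h j
    have := h ⟨(j : ℕ) / 2, by omega⟩
    simp only at this
    omega
  · rintro h ⟨i, hi⟩
    have h0 := h ⟨2 * i, by omega⟩
    simp only [show 2 * i / 2 = i by omega, show (2 * i + 1) / 2 = i by omega] at h0
    refine ⟨h0, fun h1 => ?_⟩
    obtain hi1 | hi1 := lt_or_ge (i + 1) n
    · have h2 := h ⟨2 * i + 1, by omega⟩
      simp only [show (2 * i + 1) / 2 = i by omega, show (2 * i + 1 + 1) / 2 = i + 1 by omega] at h2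
      exact h2 h1
    · have := (π ⟨i, hi⟩).isLt
      simp only at h1
      omega

theorem card_perm_forall_apply_menageCell {n : ℕ} (J : Finset (Fin (2 * n - 1))) :
    #{π : Perm (Fin n) | ∀ j ∈ J, π (menageCell n j).1 = (menageCell n j).2} =
      if NoTwoConsecutive (J.map Fin.valEmbedding) then (n - #J)! else 0 := by
  split_ifs with hJ <;> rw [noTwoConsecutive_map_valEmbedding_iff] at hJ
  · have hinj : ∀ a ∈ J, ∀ b ∈ J,
        (a : ℕ) / 2 = b / 2 ∨ ((a : ℕ) + 1) / 2 = (b + 1) / 2 → a = b :=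
      fun a ha b hb h => Fin.ext (by have := hJ a ha b hb; have := hJ b hb a ha; omega)
    have hrow : Set.InjOn (fun j => (menageCell n j).1) J :=
      fun a ha b hb h => hinj a ha b hb (.inl (Fin.ext_iff.1 h))
    have hcol : Set.InjOn (fun j => (menageCell n j).2) J :=
      fun a ha b hb h => hinj a ha b hb (.inr (Fin.ext_iff.1 h))
    -- `convert` only reconciles two decidability instances of the filter predicate.
    convert card_perm_forall_apply_eq hrow hcol using 3
    rw [Fintype.card_fin]
  · push Not at hJ
    obtain ⟨a, ha, b, hb, hab⟩ := hJ
    refine card_eq_zero.2 (filter_eq_empty_iff.2 fun π _ hπ => ?_)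
    have hab' := π.injective.eq_iff (a := (menageCell n a).1) (b := (menageCell n b).1)
    rw [hπ a ha, hπ b hb] at hab'
    simp only [menageCell, Fin.ext_iff] at hab'
    omega

theorem card_isStraightMenage_eq_sum_powerset (n : ℕ) :
    (#{π : Perm (Fin n) | IsStraightMenage π} : ℤ) =
      ∑ J ∈ (univ : Finset (Fin (2 * n - 1))).powerset,
        if NoTwoConsecutive (J.map Fin.valEmbedding) then (-1) ^ #J * ((n - #J)! : ℤ) else 0 := by
  let S (j : Fin (2 * n - 1)) : Finset (Perm (Fin n)) :=
    {π | π (menageCell n j).1 = (menageCell n j).2}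
  have hcompl : univ.inf (fun j => (S j)ᶜ) = ({π | IsStraightMenage π} : Finset _) := by
    ext π
    simp [S, mem_inf, isStraightMenage_iff_forall_menageCell]
  have hinf (J : Finset (Fin (2 * n - 1))) :
      J.inf S = ({π | ∀ j ∈ J, π (menageCell n j).1 = (menageCell n j).2} : Finset _) := by
    ext π
    simp [S, mem_inf]
  rw [← hcompl, inclusion_exclusion_card_inf_compl]
  refine sum_congr rfl fun J _ => ?_
  rw [hinf, card_perm_forall_apply_menageCell]
  split_ifs <;> simp

theorem sum_range_two_mul_sub_one_choose_smul {M : Type*} [AddCommMonoid M] (n : ℕ) (f : ℕ → M) :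
    ∑ k ∈ range (2 * n - 1 + 1), (2 * n - 1 + 1 - k).choose k • f k =
      ∑ k ∈ range (n + 1), (2 * n - k).choose k • f k := by
  obtain rfl | hn := n.eq_zero_or_pos
  · simp
  rw [Nat.sub_add_cancel (by omega : 1 ≤ 2 * n)]
  refine (sum_subset (fun k hk => ?_) fun k hk hkn => ?_).symm
  · simp only [mem_range] at hk ⊢
    omega
  · simp only [mem_range] at hk hkn
    rw [Nat.choose_eq_zero_of_lt (by omega), zero_smul]

theorem straight_menage_count (n : ℕ) :
    ((Finset.univ.filter fun π : Equiv.Perm (Fin n) => IsStraightMenage π).card : ℤ) =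
      ∑ k ∈ Finset.range (n + 1),
        (-1 : ℤ) ^ k * (Nat.choose (2 * n - k) k : ℤ) * ((n - k).factorial : ℤ) := by
  rw [card_isStraightMenage_eq_sum_powerset,
    sum_powerset_ite_eq_sum_range _ _ fun k => (-1 : ℤ) ^ k * (n - k)!, card_univ,
    Fintype.card_fin]
  simp_rw [card_filter_noTwoConsecutive_fin]
  rw [sum_range_two_mul_sub_one_choose_smul]
  refine sum_congr rfl fun k _ => ?_
  rw [nsmul_eq_mul]
  ring
end

section
/- For every natural number m ≥ 2, the number of ordinary ménage permutations in S_m (permutations π of {1,...,m} with π(i) ≠ i and π(i) ≢ i+1 (mod m) for all i) equals ∑_{k=0}^{m} (-1)^k · (2m/(2m-k)) · C(2m-k, k) · (m-k)!. -/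
open Finset

/-- An ordinary ménage permutation of `{1,...,m}` (modeled on `Fin m`):
`π i ≠ i` and `π i ≢ i + 1 (mod m)` for all `i`. -/
def IsOrdinaryMenage {m : ℕ} (π : Equiv.Perm (Fin m)) : Prop :=
  ∀ i : Fin m, π i ≠ i ∧ (π i : ℕ) ≠ ((i : ℕ) + 1) % m

instance {m : ℕ} (π : Equiv.Perm (Fin m)) : Decidable (IsOrdinaryMenage π) := by
  unfold IsOrdinaryMenage; infer_instance

/-!
Inclusion–exclusion over the forbidden cells gives the rook-polynomial formula: the permutations
of an `n`-set avoiding a board `B` number `∑ₖ (-1)ᵏ rₖ(B) (n - k)!`, where `rₖ(B)` counts the ways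
to place `k` non-attacking rooks on `B`. The `2m` cells of the ménage board, read in the order
`(0,0), (0,1), (1,1), (1,2), …, (m-1,m-1), (m-1,0)`, share a row or a column exactly when they
are cyclically consecutive, so `rₖ` is the number of `k`-element independent sets of the
`2m`-cycle. Splitting on whether vertex `0` is used reduces these to independent sets of paths,
of which there are `C(N + 1 - k, k)` on `N` vertices; this gives `2m / (2m - k) · C(2m - k, k)`.
-/

open Equiv

open scoped Nat

theorem card_filter_mem_eq_card {α : Type*} [DecidableEq α] (x : α) {F G : Finset (Finset α)}
    (herase : ∀ s ∈ F, x ∈ s → s.erase x ∈ G) (hinsert : ∀ t ∈ G, x ∉ t ∧ insert x t ∈ F) :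
    #{s ∈ F | x ∈ s} = #G := by
  refine card_nbij' (·.erase x) (insert x ·) (fun s hs => ?_) (fun t ht => ?_)
    (fun s hs => ?_) (fun t ht => ?_)
  · obtain ⟨hF, hx⟩ := mem_filter.1 hs
    exact herase s hF hx
  · exact mem_filter.2 ⟨(hinsert t ht).2, mem_insert_self x t⟩
  · exact insert_erase (mem_filter.1 hs).2
  · exact erase_insert (hinsert t ht).1

theorem card_filter_powersetCard_image {α β : Type*} [DecidableEq α] [DecidableEq β] {f : α → β}
    {s : Finset α} (hf : Set.InjOn f s) (k : ℕ) (P : Finset β → Prop) [DecidablePred P] :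
    #{u ∈ powersetCard k (s.image f) | P u} = #{t ∈ powersetCard k s | P (t.image f)} := by
  symm
  refine card_nbij (·.image f) (fun t ht => ?_) (fun t ht t' ht' h => ?_) (fun u hu => ?_)
  · simp only [coe_filter, mem_powersetCard, Set.mem_ofPred_eq] at ht ⊢
    exact ⟨⟨image_subset_image ht.1.1, (card_image_of_injOn (hf.mono ht.1.1)).trans ht.1.2⟩, ht.2⟩
  · simp only [coe_filter, mem_powersetCard, Set.mem_ofPred_eq] at ht ht'
    exact image_injOn_powerset_of_injOn hf (mem_powerset.2 ht.1.1) (mem_powerset.2 ht'.1.1) h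
  · simp only [coe_filter, mem_powersetCard, Set.mem_ofPred_eq] at hu
    obtain ⟨t, ht, rfl⟩ := image_surjOn_powerset (f := f) (mem_powerset.2 hu.1.1)
    have ht : t ⊆ s := mem_powerset.1 ht
    refine ⟨t, ?_, rfl⟩
    simp only [coe_filter, mem_powersetCard, Set.mem_ofPred_eq]
    exact ⟨⟨ht, (card_image_of_injOn (hf.mono ht)).symm.trans hu.1.2⟩, hu.2⟩

theorem add_one_mod_eq_ite {x n : ℕ} (h : x < n) :
    (x + 1) % n = if x + 1 = n then 0 else x + 1 := by
  split_ifs with hx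
  · rw [hx, Nat.mod_self]
  · exact Nat.mod_eq_of_lt (by omega)

section Rooks

variable {α : Type*}

def IsNonAttacking (S : Finset (α × α)) : Prop :=
  ∀ p ∈ S, ∀ q ∈ S, p.1 = q.1 ∨ p.2 = q.2 → p = q

theorem isNonAttacking_of_forall_apply_eq {S : Finset (α × α)} {π : Perm α}
    (h : ∀ p ∈ S, π p.1 = p.2) : IsNonAttacking S := by
  rintro p hp q hq (h₁ | h₂)
  · exact Prod.ext h₁ (by rw [← h p hp, ← h q hq, h₁])
  · exact Prod.ext (π.injective (by rw [h p hp, h q hq, h₂])) h₂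

variable [DecidableEq α]

instance (S : Finset (α × α)) : Decidable (IsNonAttacking S) := by
  unfold IsNonAttacking; infer_instance

def rookNumber (B : Finset (α × α)) (k : ℕ) : ℕ :=
  #{S ∈ B.powersetCard k | IsNonAttacking S}

theorem IsNonAttacking.card_image_fst {S : Finset (α × α)} (hS : IsNonAttacking S) :
    #(S.image Prod.fst) = #S :=
  card_image_of_injOn fun p hp q hq h => hS p hp q hq (.inl h)

variable [Fintype α]

theorem IsNonAttacking.card_le {S : Finset (α × α)} (hS : IsNonAttacking S) :
    #S ≤ Fintype.card α :=
  hS.card_image_fst ▸ card_le_univ _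

theorem card_perm_fixing (T : Finset α) :
    #{σ : Perm α | ∀ a ∈ T, σ a = a} = (Fintype.card α - #T)! := by
  calc #{σ : Perm α | ∀ a ∈ T, σ a = a}
      = Fintype.card {σ : Perm α // ∀ a, ¬a ∉ T → σ a = a} := by
        rw [← Fintype.card_subtype]; simp only [not_not]
    _ = Fintype.card (Perm {a // a ∉ T}) :=
        (Fintype.card_congr (Perm.subtypeEquivSubtypePerm _)).symm
    _ = (Fintype.card α - #T)! := by
        rw [Fintype.card_perm, Fintype.card_subtype_compl, Fintype.card_coe]

theorem card_perm_extending {S : Finset (α × α)} (hS : IsNonAttacking S) :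
    #{π : Perm α | ∀ p ∈ S, π p.1 = p.2} = (Fintype.card α - #S)! := by
  obtain ⟨π₀, hπ₀⟩ := Perm.exists_extending_pair (fun p : S => p.1.1) (fun p : S => p.1.2)
    (fun p q h => Subtype.ext (hS _ p.2 _ q.2 (.inl h)))
    (fun p q h => Subtype.ext (hS _ p.2 _ q.2 (.inr h)))
  rw [← hS.card_image_fst, ← card_perm_fixing]
  refine card_nbij' (π₀⁻¹ * ·) (π₀ * ·) ?_ ?_ (fun _ _ => by simp) (fun _ _ => by simp)
  · intro π hπ
    simp only [coe_filter, mem_univ, true_and, mem_image, Set.mem_ofPred_eq] at hπ ⊢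
    rintro _ ⟨p, hp, rfl⟩
    rw [Perm.mul_apply, hπ p hp, Perm.inv_eq_iff_eq, hπ₀ ⟨p, hp⟩]
  · intro σ hσ
    simp only [coe_filter, mem_univ, true_and, mem_image, Set.mem_ofPred_eq] at hσ ⊢
    intro p hp
    rw [Perm.mul_apply, hσ p.1 ⟨p, hp, rfl⟩, hπ₀ ⟨p, hp⟩]

theorem card_perm_avoiding (B : Finset (α × α)) :
    (#{π : Perm α | ∀ i, (i, π i) ∉ B} : ℤ) =
      ∑ k ∈ range (Fintype.card α + 1),
        (-1) ^ k * (rookNumber B k : ℤ) * ((Fintype.card α - k)! : ℤ) := by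
  have indicator (π : Perm α) : (if ∀ i, (i, π i) ∉ B then 1 else 0 : ℤ) =
      ∑ S ∈ B.powerset with ∀ p ∈ S, π p.1 = p.2, (-1) ^ #S := by
    have hpow : {S ∈ B.powerset | ∀ p ∈ S, π p.1 = p.2} = {p ∈ B | π p.1 = p.2}.powerset := by
      ext S; simp only [mem_filter, mem_powerset, subset_iff]; grind
    have hempty : {p ∈ B | π p.1 = p.2} = ∅ ↔ ∀ i, (i, π i) ∉ B := by
      simp only [filter_eq_empty_iff]
      exact ⟨fun h i hi => h hi rfl, fun h p hp hπ => h p.1 (hπ ▸ hp)⟩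
    rw [hpow, sum_powerset_neg_one_pow_card, if_congr hempty rfl rfl]
  calc (#{π : Perm α | ∀ i, (i, π i) ∉ B} : ℤ)
      = ∑ π : Perm α, ∑ S ∈ B.powerset with ∀ p ∈ S, π p.1 = p.2, (-1) ^ #S := by
        simp only [← indicator, sum_boole]
    _ = ∑ S ∈ B.powerset with IsNonAttacking S, (-1) ^ #S * ((Fintype.card α - #S)! : ℤ) := by
        simp only [sum_filter]
        rw [sum_comm]
        refine sum_congr rfl fun S _ => ?_
        split_ifs with hS
        · rw [← sum_filter, sum_const, card_perm_extending hS, nsmul_eq_mul, mul_comm]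
        · refine sum_eq_zero fun π _ => if_neg fun h => hS (isNonAttacking_of_forall_apply_eq h)
    _ = _ := by
        rw [← sum_fiberwise_of_maps_to (g := card) (t := range (Fintype.card α + 1))
          fun S hS => mem_range_succ_iff.2 (mem_filter.1 hS).2.card_le]
        refine sum_congr rfl fun k _ => ?_
        have hfiber : {S ∈ {S ∈ B.powerset | IsNonAttacking S} | #S = k} =
            {S ∈ B.powersetCard k | IsNonAttacking S} := by
          ext S; simp only [mem_filter, mem_powerset, mem_powersetCard]; tauto
        rw [sum_congr rfl fun S hS => by rw [(mem_filter.1 hS).2], sum_const, hfiber,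
          rookNumber, nsmul_eq_mul]
        ring

end Rooks

def pathIndepSets (a b k : ℕ) : Finset (Finset ℕ) :=
  {s ∈ powersetCard k (Ico a b) | ∀ x ∈ s, x + 1 ∉ s}

def cycleIndepSets (n k : ℕ) : Finset (Finset ℕ) :=
  {s ∈ pathIndepSets 0 n k | ¬(0 ∈ s ∧ n - 1 ∈ s)}

theorem card_pathIndepSets_zero (a b : ℕ) : #(pathIndepSets a b 0) = 1 := by
  simp [pathIndepSets, filter_singleton]

theorem card_pathIndepSets_of_le {a b : ℕ} (h : b ≤ a) (k : ℕ) :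
    #(pathIndepSets a b (k + 1)) = 0 := by
  simp [pathIndepSets, Ico_eq_empty_of_le h]

theorem card_pathIndepSets_succ {a b : ℕ} (h : a < b) (k : ℕ) :
    #(pathIndepSets a b (k + 1)) =
      #(pathIndepSets (a + 1) b (k + 1)) + #(pathIndepSets (a + 2) b k) := by
  rw [← card_filter_add_card_filter_not (fun s => a ∈ s), add_comm]
  congr 1
  · congr 1
    ext s
    simp only [pathIndepSets, mem_filter, mem_powersetCard, subset_iff, mem_Ico]
    grind
  · apply card_filter_mem_eq_card
    · intro s hs ha
      simp only [pathIndepSets, mem_filter, mem_powersetCard, subset_iff, mem_Ico, mem_erase,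
        card_erase_of_mem ha] at hs ⊢
      grind
    · intro t ht
      simp only [pathIndepSets, mem_filter, mem_powersetCard, subset_iff, mem_Ico,
        mem_insert] at ht ⊢
      grind

theorem card_pathIndepSets (a b k : ℕ) : #(pathIndepSets a b k) = (b - a + 1 - k).choose k := by
  induction hd : b - a using Nat.strong_induction_on generalizing a k with
  | _ d ih =>
    rcases k with _ | k
    · simp [card_pathIndepSets_zero]
    rcases le_or_gt b a with hba | hab
    · rw [card_pathIndepSets_of_le hba, Nat.choose_eq_zero_of_lt (by omega)]
    rw [card_pathIndepSets_succ hab, ih (d - 1) (by omega) (a + 1) (k + 1) (by omega),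
      ih (b - (a + 2)) (by omega) (a + 2) k rfl]
    rcases Nat.lt_or_ge k d with hkd | hkd
    · obtain ⟨j, rfl⟩ : ∃ j, d = k + 1 + j := ⟨d - k - 1, by omega⟩
      rcases Nat.eq_zero_or_pos (k + j) with h0 | h0
      · obtain ⟨rfl, rfl⟩ : k = 0 ∧ j = 0 := by omega
        simp [show b - (a + 2) = 0 by omega]
      · rw [show k + 1 + j - 1 + 1 - (k + 1) = j by omega, show b - (a + 2) + 1 - k = j by omega,
          show k + 1 + j + 1 - (k + 1) = j + 1 by omega, Nat.choose_succ_succ', add_comm]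
    · rw [Nat.choose_eq_zero_of_lt (by omega), Nat.choose_eq_zero_of_lt (by omega),
        Nat.choose_eq_zero_of_lt (by omega)]

theorem card_cycleIndepSets_zero (n : ℕ) : #(cycleIndepSets n 0) = 1 := by
  simp [cycleIndepSets, pathIndepSets, filter_singleton]

theorem card_cycleIndepSets_succ {n : ℕ} (hn : 2 ≤ n) (k : ℕ) :
    #(cycleIndepSets n (k + 1)) = #(pathIndepSets 1 n (k + 1)) + #(pathIndepSets 2 (n - 1) k) := by
  rw [← card_filter_add_card_filter_not (fun s => 0 ∈ s), add_comm]
  congr 1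
  · congr 1
    ext s
    simp only [cycleIndepSets, pathIndepSets, mem_filter, mem_powersetCard, subset_iff, mem_Ico]
    grind
  · apply card_filter_mem_eq_card
    · intro s hs ha
      simp only [cycleIndepSets, pathIndepSets, mem_filter, mem_powersetCard, subset_iff, mem_Ico,
        mem_erase, card_erase_of_mem ha] at hs ⊢
      grind
    · intro t ht
      simp only [cycleIndepSets, pathIndepSets, mem_filter, mem_powersetCard, subset_iff, mem_Ico,
        mem_insert] at ht ⊢
      grind

theorem card_cycleIndepSets {n k : ℕ} (hn : 2 ≤ n) (hk : k < n) :
    (#(cycleIndepSets n k) : ℚ) = n / (n - k : ℕ) * (n - k).choose k := by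
  rcases k with _ | k
  · have : (n : ℚ) ≠ 0 := by positivity
    simp [card_cycleIndepSets_zero, this]
  obtain ⟨j, rfl⟩ : ∃ j, n = j + k + 2 := ⟨n - k - 2, by omega⟩
  have hsecond : (j + k + 2 - 1 - 2 + 1 - k).choose k = j.choose k := by
    rcases Nat.eq_zero_or_pos (j + k) with h | h
    · obtain ⟨rfl, rfl⟩ : j = 0 ∧ k = 0 := by omega
      rfl
    · congr 1; omega
  rw [card_cycleIndepSets_succ hn, card_pathIndepSets, card_pathIndepSets, hsecond,
    show j + k + 2 - 1 + 1 - (k + 1) = j + 1 by omega, show j + k + 2 - (k + 1) = j + 1 by omega]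
  have key : ((j + 1 : ℕ) : ℚ) * j.choose k = (j + 1).choose (k + 1) * (k + 1 : ℕ) := by
    exact_mod_cast Nat.add_one_mul_choose_eq j k
  field_simp
  push_cast at key ⊢
  linear_combination key

def menageBoard (m : ℕ) : Finset (Fin m × Fin m) :=
  {p | p.2 = p.1 ∨ (p.2 : ℕ) = (p.1 + 1) % m}

theorem isOrdinaryMenage_iff {m : ℕ} (π : Equiv.Perm (Fin m)) :
    IsOrdinaryMenage π ↔ ∀ i, (i, π i) ∉ menageBoard m := by
  simp [IsOrdinaryMenage, menageBoard]

def menageCode {m : ℕ} (p : Fin m × Fin m) : ℕ :=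
  2 * p.1 + if p.2 = p.1 then 0 else 1

theorem mem_menageBoard_iff {m : ℕ} {p : Fin m × Fin m} :
    p ∈ menageBoard m ↔
      (p.2 : ℕ) = p.1 ∨ (p.2 : ℕ) = if (p.1 : ℕ) + 1 = m then (0 : ℕ) else (p.1 : ℕ) + 1 := by
  rw [menageBoard, mem_filter, ← add_one_mod_eq_ite p.1.2, Fin.ext_iff]
  simp

theorem menageCode_lt {m : ℕ} (p : Fin m × Fin m) : menageCode p < 2 * m := by
  have := p.1.2
  unfold menageCode; split_ifs <;> omega

theorem menageCode_injOn (m : ℕ) : Set.InjOn menageCode (menageBoard m : Set (Fin m × Fin m)) := by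
  rintro ⟨⟨i, hi⟩, ⟨j, hj⟩⟩ hp ⟨⟨i', hi'⟩, ⟨j', hj'⟩⟩ hq h
  simp only [mem_coe, mem_menageBoard_iff] at hp hq
  simp only [menageCode, Fin.mk.injEq, Prod.mk.injEq] at h hp hq ⊢
  split_ifs at h hp hq <;> omega

theorem image_menageCode {m : ℕ} (hm : 2 ≤ m) :
    (menageBoard m).image menageCode = range (2 * m) := by
  refine (image_subset_iff.2 fun p _ => mem_range.2 (menageCode_lt p)).antisymm fun x hx => ?_
  rw [mem_range] at hx
  refine mem_image.2 ⟨(⟨x / 2, by omega⟩, ⟨if x % 2 = 0 then x / 2 else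
    if x / 2 + 1 = m then 0 else x / 2 + 1, by split_ifs <;> omega⟩), ?_, ?_⟩
  · rw [mem_menageBoard_iff]
    dsimp only
    split_ifs <;> omega
  · simp only [menageCode, Fin.ext_iff]
    split_ifs <;> omega

theorem menageBoard_attack_iff {m : ℕ} (hm : 2 ≤ m) {p q : Fin m × Fin m}
    (hp : p ∈ menageBoard m) (hq : q ∈ menageBoard m) :
    (p ≠ q ∧ (p.1 = q.1 ∨ p.2 = q.2)) ↔
      (menageCode q = menageCode p + 1 ∨ menageCode p = menageCode q + 1 ∨
        (menageCode p = 0 ∧ menageCode q = 2 * m - 1) ∨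
        (menageCode q = 0 ∧ menageCode p = 2 * m - 1)) := by
  obtain ⟨⟨i, hi⟩, ⟨j, hj⟩⟩ := p
  obtain ⟨⟨i', hi'⟩, ⟨j', hj'⟩⟩ := q
  simp only [mem_menageBoard_iff] at hp hq
  simp only [menageCode, Fin.mk.injEq, ne_eq, Prod.mk.injEq, not_and_or] at hp hq ⊢
  split_ifs at hp hq ⊢ <;> grind

theorem isNonAttacking_iff_image_menageCode {m : ℕ} (hm : 2 ≤ m) {S : Finset (Fin m × Fin m)}
    (hS : S ⊆ menageBoard m) :
    IsNonAttacking S ↔ (∀ x ∈ S.image menageCode, x + 1 ∉ S.image menageCode) ∧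
      ¬(0 ∈ S.image menageCode ∧ 2 * m - 1 ∈ S.image menageCode) := by
  have attack {p q} (hp : p ∈ S) (hq : q ∈ S) := menageBoard_attack_iff hm (hS hp) (hS hq)
  constructor
  · intro hna
    refine ⟨?_, ?_⟩
    · intro x hx hx₁
      obtain ⟨p, hp, rfl⟩ := mem_image.1 hx
      obtain ⟨q, hq, hpq⟩ := mem_image.1 hx₁
      obtain ⟨hne, hpq⟩ := (attack hp hq).2 (.inl hpq)
      exact hne (hna p hp q hq hpq)
    · rintro ⟨h₀, h₁⟩
      obtain ⟨p, hp, hp0⟩ := mem_image.1 h₀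
      obtain ⟨q, hq, hq1⟩ := mem_image.1 h₁
      obtain ⟨hne, hpq⟩ := (attack hp hq).2 (.inr (.inr (.inl ⟨hp0, hq1⟩)))
      exact hne (hna p hp q hq hpq)
  · rintro ⟨hsucc, hends⟩ p hp q hq hpq
    by_contra hne
    have hp' := mem_image_of_mem menageCode hp
    have hq' := mem_image_of_mem menageCode hq
    rcases (attack hp hq).1 ⟨hne, hpq⟩ with h | h | ⟨h₀, h₁⟩ | ⟨h₀, h₁⟩
    · exact hsucc _ hp' (h ▸ hq')
    · exact hsucc _ hq' (h ▸ hp')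
    · exact hends ⟨h₀ ▸ hp', h₁ ▸ hq'⟩
    · exact hends ⟨h₀ ▸ hq', h₁ ▸ hp'⟩

theorem rookNumber_menageBoard {m : ℕ} (hm : 2 ≤ m) (k : ℕ) :
    rookNumber (menageBoard m) k = #(cycleIndepSets (2 * m) k) := by
  rw [cycleIndepSets, pathIndepSets, filter_filter, ← range_eq_Ico, ← image_menageCode hm,
    card_filter_powersetCard_image (menageCode_injOn m), rookNumber]
  exact congrArg card (filter_congr fun S hS =>
    isNonAttacking_iff_image_menageCode hm (mem_powersetCard.1 hS).1)

theorem ordinary_menage_count (m : ℕ) (hm : 2 ≤ m) :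
    ((Finset.univ.filter fun π : Equiv.Perm (Fin m) => IsOrdinaryMenage π).card : ℚ) =
      ∑ k ∈ Finset.range (m + 1),
        (-1 : ℚ) ^ k * ((2 * m : ℚ) / ((2 * m - k : ℕ) : ℚ)) *
          (Nat.choose (2 * m - k) k : ℚ) * ((m - k).factorial : ℚ) := by
  have hrook := card_perm_avoiding (menageBoard m)
  simp only [Fintype.card_fin, ← isOrdinaryMenage_iff] at hrook
  rw [← Int.cast_natCast, hrook]
  push_cast
  refine sum_congr rfl fun k hk => ?_
  rw [rookNumber_menageBoard hm, card_cycleIndepSets (by omega) (by rw [mem_range] at hk; omega)]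
  push_cast
  ring
end

section
/- As formal power series, ∑_{n≥0} n! x^n = ∑_{n≥0} V_n x^n c(x)^{2n+1}, where c(x) is the generating function of the Catalan numbers and V_n is the n-th straight ménage number. -/
/-
Inclusion–exclusion over the staircase board of cells `(i, i)` and `(i, i + 1)` gives
`V n = ∑ p, (-1) ^ (n + p) * C(n + p, 2p) * p!`: listing the `2n - 1` cells as
`(0,0), (0,1), (1,1), (1,2), …`, two cells share a row or a column exactly when they are
consecutive, so `k` non-attacking rooks are `k` pairwise non-consecutive cells (there are
`C(2n - k, k)` such sets), and each placement extends to `(n - k)!` permutations.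
On the power-series side, `1 - c = -x c²`; substituting `y = 1 - c` into
`(∑ n, C(n + p, 2p) yⁿ) (1 - y) ^ (2p + 1) = y ^ p` gives
`∑ n, (-1) ^ (n + p) C(n + p, 2p) xⁿ c ^ (2n + 1) = x ^ p`, and summing `p!` times this over `p`
yields the identity.
-/

open Finset PowerSeries

/-- The `n`-th straight ménage number. -/
def straightMenage (n : ℕ) : ℕ :=
  (Finset.univ.filter fun π : Equiv.Perm (Fin n) => IsStraightMenage π).card

/-- The generating function of the Catalan numbers `C_k = (2k)!/(k!(k+1)!)` over `ℚ`. -/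
noncomputable def catGF : PowerSeries ℚ :=
  PowerSeries.mk fun k => ((2 * k).factorial : ℚ) / ((k.factorial : ℚ) * ((k + 1).factorial : ℚ))

namespace PowerSeries

variable {R : Type*} [CommRing R]

theorem mk_choose_add_mul_one_sub_pow (a d : ℕ) :
    (mk fun n => ((n + a).choose (a + d) : R)) * (1 - X) ^ (a + d + 1) = X ^ d := by
  have hshift : (mk fun n => ((n + a).choose (a + d) : R)) =
      X ^ d * mk fun j => ((a + d + j).choose (a + d) : R) := by
    ext n
    rw [coeff_X_pow_mul', coeff_mk]
    split_ifs with hn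
    · rw [coeff_mk]; congr 2; omega
    · rw [Nat.choose_eq_zero_of_lt (by omega), Nat.cast_zero]
  rw [hshift, mul_assoc, mk_add_choose_mul_one_sub_pow_eq_one, mul_one]

theorem pow_dvd_sum_coeff_mul_pow_mul_aeval_sub {A : Type*} [CommRing A] [Algebra R A]
    {f : R⟦X⟧} {P Q : Polynomial R} (h : f * P = Q) (y : A) (N : ℕ) :
    y ^ N ∣ (∑ n ∈ range N, algebraMap R A (coeff n f) * y ^ n) * Polynomial.aeval y P -
      Polynomial.aeval y Q := by
  have hdvd : Polynomial.X ^ N ∣ trunc N f * P - Q := by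
    rw [Polynomial.X_pow_dvd_iff]
    intro d hd
    rw [← Polynomial.coeff_coe, Polynomial.coe_sub, Polynomial.coe_mul, ← h, ← sub_mul]
    refine (X_pow_dvd_iff.mp (dvd_mul_of_dvd_left ?_ _)) d hd
    rw [X_pow_dvd_iff]
    intro k hk
    simp [Polynomial.coeff_coe, coeff_trunc, hk]
  simpa [Polynomial.aeval_def, eval₂_trunc_eq_sum_range] using
    map_dvd (Polynomial.aeval y) hdvd

end PowerSeries

theorem catGF_eq_map_catalanSeries : catGF = map (Nat.castRingHom ℚ) catalanSeries := by
  ext k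
  have hcat : ((k + 1 : ℕ) : ℚ) * catalan k = (2 * k).factorial / (k.factorial * k.factorial) := by
    rw [← Nat.cast_mul, succ_mul_catalan_eq_centralBinom, Nat.centralBinom_eq_two_mul_choose,
      Nat.cast_choose ℚ (by omega), show 2 * k - k = k by omega]
  rw [catGF, coeff_mk, coeff_map, catalanSeries_coeff, Nat.factorial_succ, Nat.cast_mul]
  field_simp
  rw [eq_div_iff (by positivity)] at hcat
  push_cast at hcat ⊢
  linear_combination -hcat

theorem one_sub_catGF : 1 - catGF = -(X * catGF ^ 2) := by
  have h := congrArg (map (Nat.castRingHom ℚ)) catalanSeries_sq_mul_X_add_one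
  rw [map_add, map_mul, map_pow, map_X, map_one, ← catGF_eq_map_catalanSeries] at h
  linear_combination h

theorem isUnit_catGF : IsUnit catGF := by
  rw [isUnit_iff_constantCoeff, catGF_eq_map_catalanSeries, ← coeff_zero_eq_constantCoeff_apply]
  simp

theorem one_sub_catGF_pow (k : ℕ) : (1 - catGF) ^ k = (-1) ^ k * X ^ k * catGF ^ (2 * k) := by
  rw [one_sub_catGF]; ring

theorem X_pow_dvd_catGF_mul_sum_choose_sub (p N : ℕ) :
    X ^ N ∣ catGF * (∑ n ∈ range N, ((n + p).choose (2 * p) : ℚ⟦X⟧) * (1 - catGF) ^ n) -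
      (-1) ^ p * X ^ p := by
  set S := ∑ n ∈ range N, ((n + p).choose (2 * p) : ℚ⟦X⟧) * (1 - catGF) ^ n
  have h := pow_dvd_sum_coeff_mul_pow_mul_aeval_sub (P := (1 - Polynomial.X) ^ (p + p + 1))
    (Q := Polynomial.X ^ p) (by simpa using mk_choose_add_mul_one_sub_pow (R := ℚ) p p)
    (1 - catGF) N
  simp only [coeff_mk, map_natCast, map_pow, map_sub, map_one, Polynomial.aeval_X,
    sub_sub_cancel, ← two_mul] at h
  have hX : X ^ N ∣ (1 - catGF) ^ N := by
    rw [one_sub_catGF_pow]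
    exact dvd_mul_of_dvd_left (dvd_mul_left _ _) _
  have hfactor : S * catGF ^ (2 * p + 1) - (1 - catGF) ^ p =
      catGF ^ (2 * p) * (catGF * S - (-1) ^ p * X ^ p) := by
    rw [one_sub_catGF_pow]; ring
  rw [hfactor] at h
  exact (isUnit_catGF.pow _).dvd_mul_left.mp (hX.trans h)

theorem sum_neg_one_pow_mul_choose_mul_coeff_catGF_pow (p m : ℕ) :
    ∑ n ∈ range (m + 1), (-1) ^ (n + p) * ((n + p).choose (2 * p) : ℚ) *
      coeff (m - n) (catGF ^ (2 * n + 1)) = if m = p then 1 else 0 := by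
  have hterm : ∀ n ∈ range (m + 1),
      coeff m (catGF * (((n + p).choose (2 * p) : ℚ⟦X⟧) * (1 - catGF) ^ n)) =
        (-1) ^ n * ((n + p).choose (2 * p) : ℚ) * coeff (m - n) (catGF ^ (2 * n + 1)) := by
    intro n hn
    have hnm : n ≤ m := Nat.lt_succ_iff.mp (mem_range.mp hn)
    have hrw : catGF * (((n + p).choose (2 * p) : ℚ⟦X⟧) * (1 - catGF) ^ n) =
        C ((-1) ^ n * ((n + p).choose (2 * p) : ℚ)) * (X ^ n * catGF ^ (2 * n + 1)) := by
      rw [one_sub_catGF_pow, map_mul, map_pow, map_neg, map_one, map_natCast]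
      ring
    rw [hrw, coeff_C_mul, coeff_X_pow_mul', if_pos hnm]
  have hcoeff := X_pow_dvd_iff.mp (X_pow_dvd_catGF_mul_sum_choose_sub p (m + 1)) m (by omega)
  have hsign : (-1 : ℚ⟦X⟧) ^ p = C ((-1) ^ p) := by simp
  rw [map_sub, sub_eq_zero, mul_sum, map_sum, sum_congr rfl hterm, hsign, coeff_C_mul,
    coeff_X_pow] at hcoeff
  calc _ = (-1) ^ p * ∑ n ∈ range (m + 1), (-1) ^ n * ((n + p).choose (2 * p) : ℚ) *
        coeff (m - n) (catGF ^ (2 * n + 1)) := by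
        rw [mul_sum]; exact sum_congr rfl fun n _ => by ring
    _ = _ := by rw [hcoeff, ← mul_assoc, ← mul_pow, neg_one_mul, neg_neg, one_pow, one_mul]

theorem Equiv.Perm.card_filter_forall_apply_eq {ι α : Type*} [Fintype ι] [Fintype α]
    [DecidableEq α] {f g : ι → α} (hf : f.Injective) (hg : g.Injective) :
    #{π : Perm α | ∀ i, π (f i) = g i} = (Fintype.card α - Fintype.card ι).factorial := by
  obtain ⟨σ, hσ⟩ := Perm.exists_extending_pair f g hf hg
  have hfix : #{π : Perm α | ∀ i, π (f i) = g i} = #{τ : Perm α | ∀ i, τ (f i) = f i} := by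
    refine card_nbij' (σ⁻¹ * ·) (σ * ·) ?_ ?_ (fun π _ => mul_inv_cancel_left σ π)
      (fun τ _ => inv_mul_cancel_left σ τ) <;> intro π hπ <;> simp only [coe_filter, mem_univ,
        true_and, Set.mem_ofPred_eq, Perm.mul_apply] at hπ ⊢ <;> intro i
    · rw [hπ, Perm.inv_eq_iff_eq, hσ]
    · rw [hπ, hσ]
  rw [hfix, ← Fintype.card_subtype, ← Fintype.card_congr
    ((Perm.subtypeEquivSubtypePerm (· ∉ Set.range f)).trans (Equiv.subtypeEquivRight ?_)),
    Fintype.card_perm, Fintype.card_subtype_compl, Set.card_range_of_injective hf]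
  intro τ
  simp

def NoConsecutive (S : Finset ℕ) : Prop := ∀ x ∈ S, x + 1 ∉ S

instance : DecidablePred NoConsecutive := fun S => by unfold NoConsecutive; infer_instance

theorem noConsecutive_insert_iff {ℓ : ℕ} {T : Finset ℕ} (hT : T ⊆ range (ℓ + 1)) :
    NoConsecutive (insert (ℓ + 1) T) ↔ NoConsecutive T ∧ ℓ ∉ T := by
  have hlt : ∀ x ∈ T, x < ℓ + 1 := fun x hx => mem_range.mp (hT hx)
  simp only [NoConsecutive, mem_insert, forall_eq_or_imp, add_left_inj]
  constructor
  · rintro ⟨-, h⟩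
    exact ⟨fun x hx => (not_or.mp (h x hx)).2, fun hℓ => (not_or.mp (h ℓ hℓ)).1 rfl⟩
  · rintro ⟨h, hℓ⟩
    refine ⟨fun h' => h'.elim (by omega) (fun h' => by have := hlt _ h'; omega), fun x hx => ?_⟩
    rintro (rfl | h')
    · exact hℓ hx
    · exact h x hx h'

theorem card_noConsecutive_succ_succ (ℓ k : ℕ) :
    #{S ∈ (range (ℓ + 2)).powersetCard (k + 1) | NoConsecutive S} =
      #{S ∈ (range (ℓ + 1)).powersetCard (k + 1) | NoConsecutive S} +
        #{S ∈ (range ℓ).powersetCard k | NoConsecutive S} := by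
  rw [range_add_one, powersetCard_succ_insert notMem_range_self, filter_union,
    card_union_of_disjoint, filter_image, card_image_of_injOn]
  · congr 2
    ext T
    simp only [mem_filter, mem_powersetCard]
    constructor
    · rintro ⟨⟨hT, hk⟩, h⟩
      obtain ⟨h, hℓ⟩ := (noConsecutive_insert_iff hT).mp h
      rw [range_add_one, subset_insert_iff_of_notMem hℓ] at hT
      exact ⟨⟨hT, hk⟩, h⟩
    · rintro ⟨⟨hT, hk⟩, h⟩
      have hT' : T ⊆ range (ℓ + 1) := hT.trans (range_subset_range.mpr (by omega))
      have hℓ : ℓ ∉ T := fun hℓ => by simpa using hT hℓ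
      exact ⟨⟨hT', hk⟩, (noConsecutive_insert_iff hT').mpr ⟨h, hℓ⟩⟩
  · intro S hS T hT hST
    have hS' : ℓ + 1 ∉ S := fun h => by simpa using (mem_powersetCard.mp (mem_filter.mp hS).1).1 h
    have hT' : ℓ + 1 ∉ T := fun h => by simpa using (mem_powersetCard.mp (mem_filter.mp hT).1).1 h
    rw [← erase_insert hS', ← erase_insert hT', hST]
  · refine disjoint_filter_filter (disjoint_left.mpr fun S hS hS' => ?_)
    obtain ⟨T, -, rfl⟩ := mem_image.mp hS'
    simpa using (mem_powersetCard.mp hS).1 (mem_insert_self _ T)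

theorem card_noConsecutive : ∀ ℓ k : ℕ,
    #{S ∈ (range ℓ).powersetCard k | NoConsecutive S} = (ℓ + 1 - k).choose k
  | _, 0 => by rw [powersetCard_zero, filter_singleton, if_pos (by simp [NoConsecutive])]; rfl
  | 0, k + 1 => by simp
  | 1, 0 + 1 => by decide
  | 1, k + 2 => by simp
  | ℓ + 2, k + 1 => by
    rw [card_noConsecutive_succ_succ, card_noConsecutive (ℓ + 1) (k + 1), card_noConsecutive ℓ k]
    rcases le_or_gt k (ℓ + 1) with hk | hk
    · rw [show ℓ + 2 + 1 - (k + 1) = ℓ + 1 - k + 1 by omega, Nat.choose_succ_succ',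
        show ℓ + 1 + 1 - (k + 1) = ℓ + 1 - k by omega, add_comm]
    · rw [Nat.choose_eq_zero_of_lt (by omega : ℓ + 1 + 1 - (k + 1) < k + 1),
        Nat.choose_eq_zero_of_lt (by omega : ℓ + 1 - k < k),
        Nat.choose_eq_zero_of_lt (by omega : ℓ + 2 + 1 - (k + 1) < k + 1)]

section StaircaseBoard

open Equiv

variable (m : ℕ)

/-- Cell `c` of the staircase board is `(c / 2, (c + 1) / 2)`:
`2i ↦ (i, i)` and `2i + 1 ↦ (i, i + 1)`. -/
def permsHitting (c : ℕ) : Finset (Perm (Fin m)) :=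
  {π | ∃ i : Fin m, (i : ℕ) = c / 2 ∧ (π i : ℕ) = (c + 1) / 2}

theorem filter_isStraightMenage_eq_inf_compl :
    ({π | IsStraightMenage π} : Finset (Perm (Fin m))) =
      (range (2 * m - 1)).inf fun c => (permsHitting m c)ᶜ := by
  ext π
  simp only [mem_filter, mem_univ, true_and, mem_inf, mem_range, mem_compl, permsHitting,
    not_exists, not_and, IsStraightMenage, ne_eq, Fin.ext_iff]
  constructor
  · intro h c _ i hi hπi
    have := h i
    omega
  · intro h i
    have hi := i.isLt
    have hπi := (π i).isLt
    exact ⟨fun h' => h (2 * i) (by omega) i (by omega) (by omega),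
      fun h' => h (2 * i + 1) (by omega) i (by omega) (by omega)⟩

variable {m}

theorem card_inf_permsHitting {N : Finset ℕ} (hN : N ⊆ range (2 * m - 1)) :
    #(N.inf (permsHitting m)) = if NoConsecutive N then (m - #N).factorial else 0 := by
  have hlt : ∀ c : N, (c : ℕ) < 2 * m - 1 := fun c => mem_range.mp (hN c.2)
  let row : N → Fin m := fun c => ⟨c / 2, by have := hlt c; omega⟩
  let col : N → Fin m := fun c => ⟨(c + 1) / 2, by have := hlt c; omega⟩
  have hinf :
      N.inf (permsHitting m) = ({π | ∀ c, π (row c) = col c} : Finset (Perm (Fin m))) := by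
    ext π
    simp only [mem_inf, permsHitting, mem_filter, mem_univ, true_and, Fin.ext_iff]
    constructor
    · intro h c
      obtain ⟨i, hi, hπi⟩ := h c c.2
      rwa [show i = row c from Fin.ext hi] at hπi
    · exact fun h c hc => ⟨row ⟨c, hc⟩, rfl, h ⟨c, hc⟩⟩
  rw [hinf]
  split_ifs with hNC
  · have hsep : ∀ c d : N, (c : ℕ) / 2 = d / 2 ∨ ((c : ℕ) + 1) / 2 = (d + 1) / 2 → c = d := by
      intro c d h
      by_contra hcd
      have : (c : ℕ) ≠ d := Subtype.coe_ne_coe.mpr hcd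
      rcases (by omega : (d : ℕ) = c + 1 ∨ (c : ℕ) = d + 1) with h' | h'
      · exact hNC c c.2 (h' ▸ d.2)
      · exact hNC d d.2 (h' ▸ c.2)
    rw [Perm.card_filter_forall_apply_eq, Fintype.card_fin, Fintype.card_coe]
    · exact fun c d h => hsep c d (Or.inl (congrArg Fin.val h))
    · exact fun c d h => hsep c d (Or.inr (congrArg Fin.val h))
  · obtain ⟨c, hc, hc'⟩ : ∃ c ∈ N, c + 1 ∈ N := by simpa [NoConsecutive] using hNC
    refine card_eq_zero.mpr (filter_eq_empty_iff.mpr fun π _ h => ?_)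
    have hrow := π.injective.eq_iff (a := row ⟨c, hc⟩) (b := row ⟨c + 1, hc'⟩)
    rw [h, h] at hrow
    simp only [row, col, Fin.ext_iff] at hrow
    omega

end StaircaseBoard

theorem straightMenage_eq_sum_noConsecutive (m : ℕ) :
    (straightMenage m : ℤ) = ∑ N ∈ (range (2 * m - 1)).powerset with NoConsecutive N,
      (-1) ^ #N * ((m - #N).factorial : ℤ) := by
  rw [straightMenage, filter_isStraightMenage_eq_inf_compl, inclusion_exclusion_card_inf_compl,
    sum_filter]
  refine sum_congr rfl fun N hN => ?_
  rw [card_inf_permsHitting (mem_powerset.mp hN)]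
  split_ifs <;> simp

theorem straightMenage_eq_sum_choose (m : ℕ) :
    (straightMenage m : ℤ) =
      ∑ k ∈ range (m + 1), (-1) ^ k * ((2 * m - k).choose k * (m - k).factorial : ℤ) := by
  have hcard : ∀ N ∈ {N ∈ (range (2 * m - 1)).powerset | NoConsecutive N},
      #N ∈ range (2 * m - 1 + 1) := fun N hN => by
    simpa [Nat.lt_succ_iff] using card_le_card (mem_powerset.mp (mem_filter.mp hN).1)
  rw [straightMenage_eq_sum_noConsecutive, ← sum_fiberwise_of_maps_to hcard]
  have hfiber : ∀ k, ∑ N ∈ {N ∈ (range (2 * m - 1)).powerset | NoConsecutive N} with #N = k,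
      (-1) ^ #N * ((m - #N).factorial : ℤ) =
        (-1) ^ k * ((2 * m - 1 + 1 - k).choose k * (m - k).factorial : ℤ) := by
    intro k
    rw [sum_congr rfl fun N hN => by rw [(mem_filter.mp hN).2], sum_const, nsmul_eq_mul,
      ← card_noConsecutive, powersetCard_eq_filter, filter_comm, filter_filter]
    ring
  have hchoose : ∀ k ≤ m, (2 * m - 1 + 1 - k).choose k = (2 * m - k).choose k := by
    intro k hk
    rcases Nat.eq_zero_or_pos m with rfl | hm
    · rw [Nat.le_zero.mp hk, Nat.choose_zero_right, Nat.choose_zero_right]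
    · congr 1; omega
  rw [sum_congr rfl fun k _ => hfiber k,
    ← sum_subset (range_subset_range.mpr (show m + 1 ≤ 2 * m - 1 + 1 by omega))]
  · refine sum_congr rfl fun k hk => ?_
    rw [hchoose k (Nat.lt_succ_iff.mp (mem_range.mp hk))]
  · intro k _ hk
    rw [Nat.choose_eq_zero_of_lt (by simp at hk; omega), Nat.cast_zero, zero_mul, mul_zero]

theorem straightMenage_eq_sum_choose_two_mul (n : ℕ) :
    (straightMenage n : ℚ) =
      ∑ p ∈ range (n + 1), (-1) ^ (n + p) * ((n + p).choose (2 * p) : ℚ) * p.factorial := by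
  have h := congrArg (Int.cast : ℤ → ℚ) (straightMenage_eq_sum_choose n)
  push_cast at h
  rw [h, ← sum_range_reflect]
  refine sum_congr rfl fun p hp => ?_
  have hpn : p ≤ n := Nat.lt_succ_iff.mp (mem_range.mp hp)
  have hsign : (-1 : ℚ) ^ (n - p) = (-1) ^ (n + p) := by
    rw [show n + p = n - p + 2 * p by omega, pow_add, pow_mul, neg_one_sq, one_pow, mul_one]
  rw [show n + 1 - 1 - p = n - p by omega, show 2 * n - (n - p) = n + p by omega,
    show n - (n - p) = p by omega, Nat.choose_symm_of_eq_add (by omega : n + p = n - p + 2 * p),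
    hsign, mul_assoc]

/-- `∑_{n≥0} n! x^n = ∑_{n≥0} V_n x^n c(x)^{2n+1}`.  Since the `n`-th summand on the right is
divisible by `x^n`, the sum is formally summable and its coefficient of `x^m` is the finite sum
`∑_{n=0}^{m} V_n · [x^{m-n}] c(x)^{2n+1}`. -/
theorem straight_menage_gf :
    (PowerSeries.mk fun n => (n.factorial : ℚ)) =
      PowerSeries.mk fun m =>
        ∑ n ∈ Finset.range (m + 1),
          (straightMenage n : ℚ) * PowerSeries.coeff (R := ℚ) (m - n) (catGF ^ (2 * n + 1)) := by
  ext m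
  rw [coeff_mk, coeff_mk]
  have hV : ∀ n ∈ range (m + 1), (straightMenage n : ℚ) =
      ∑ p ∈ range (m + 1), (-1) ^ (n + p) * ((n + p).choose (2 * p) : ℚ) * p.factorial := by
    intro n hn
    rw [straightMenage_eq_sum_choose_two_mul]
    refine sum_subset (range_subset_range.mpr (mem_range.mp hn)) fun p _ hp => ?_
    rw [Nat.choose_eq_zero_of_lt (by simp at hp; omega), Nat.cast_zero, mul_zero, zero_mul]
  calc (m.factorial : ℚ)
      = ∑ p ∈ range (m + 1), (p.factorial : ℚ) * if m = p then 1 else 0 := by simp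
    _ = ∑ p ∈ range (m + 1), (p.factorial : ℚ) * ∑ n ∈ range (m + 1),
          (-1) ^ (n + p) * ((n + p).choose (2 * p) : ℚ) * coeff (m - n) (catGF ^ (2 * n + 1)) := by
        simp only [sum_neg_one_pow_mul_choose_mul_coeff_catGF_pow]
    _ = ∑ n ∈ range (m + 1), (∑ p ∈ range (m + 1), (-1) ^ (n + p) *
          ((n + p).choose (2 * p) : ℚ) * p.factorial) * coeff (m - n) (catGF ^ (2 * n + 1)) := by
        simp only [mul_sum, sum_mul]
        rw [sum_comm]
        exact sum_congr rfl fun n _ => sum_congr rfl fun p _ => by ring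
    _ = _ := sum_congr rfl fun n hn => by rw [hV n hn]
end

section
/- The Catalan generating function satisfies c(x)^3 = (1 - x·c(x)^2) · c'(x) as formal power series, where c' denotes the formal derivative. -/
/-
Differentiating the functional equation `c = 1 + x c²` gives `c'(1 - 2xc) = c²`, hence
`c³ = c'(c - 2xc²) = c'(2 - c) = c'(1 - xc²)`, using `xc² = c - 1` twice.
-/

open PowerSeries

section FunctionalEquation

variable {R : Type*} [CommRing R] {f : R⟦X⟧}

theorem derivative_mul_one_sub_two_X_mul_eq_sq (hf : f = 1 + X * f ^ 2) :
    d⁄dX R f * (1 - 2 * X * f) = f ^ 2 := by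
  have hd : d⁄dX R f = f ^ 2 + X * (2 * f * d⁄dX R f) := by
    conv_lhs => rw [hf]
    rw [map_add, Derivation.map_one_eq_zero, Derivation.leibniz, Derivation.leibniz_pow,
      derivative_X, smul_eq_mul, smul_eq_mul, nsmul_eq_mul]
    push_cast
    ring
  linear_combination hd

theorem pow_three_eq_one_sub_X_mul_sq_mul_derivative (hf : f = 1 + X * f ^ 2) :
    f ^ 3 = (1 - X * f ^ 2) * d⁄dX R f := by
  linear_combination d⁄dX R f * hf - f * derivative_mul_one_sub_two_X_mul_eq_sq hf

end FunctionalEquation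

theorem coeff_catGF (n : ℕ) : coeff n catGF = catalan n := by
  have hcentral : ((2 * n).factorial : ℚ) / (n.factorial * n.factorial) = n.centralBinom := by
    rw [Nat.centralBinom_eq_two_mul_choose, Nat.cast_choose ℚ (by omega : n ≤ 2 * n),
      show 2 * n - n = n by omega]
  have hcatalan : ((n + 1 : ℕ) : ℚ) * catalan n = n.centralBinom := by
    exact_mod_cast succ_mul_catalan_eq_centralBinom n
  have hn : ((n + 1 : ℕ) : ℚ) ≠ 0 := by positivity
  rw [catGF, coeff_mk, Nat.factorial_succ, eq_comm, ← mul_right_inj' hn, hcatalan, ← hcentral]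
  push_cast
  field_simp

theorem catGF_eq_one_add_X_mul_sq : catGF = 1 + X * catGF ^ 2 := by
  ext (_ | n)
  · simp [coeff_catGF]
  · rw [map_add, coeff_succ_X_mul, sq, coeff_mul, coeff_one, if_neg n.succ_ne_zero, zero_add]
    simp only [coeff_catGF, catalan_succ', Nat.cast_sum, Nat.cast_mul]

/-- `c(x)^3 = (1 - x·c(x)^2)·c'(x)` as formal power series. -/
theorem catGF_cube_eq : catGF ^ 3 = (1 - PowerSeries.X * catGF ^ 2) * catGF.derivativeFun :=
  pow_three_eq_one_sub_X_mul_sq_mul_derivative catGF_eq_one_add_X_mul_sq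
end

section
/- As formal power series over ℚ: ∑_{n≥0} V_n x^n = ∑_{n≥0} n! · x^n / (1+x)^{2n+1}, where V_n = ∑_{k=0}^{n} (-1)^k C(2n-k,k) (n-k)!. -/
/-!
Substituting `n ↦ m - n` in Touchard's sum turns its `n`-th term into `n!` times the
`x^m`-coefficient of `x^n (1+x)^{-(2n+1)}`, because
`(1+x)^{-(d+1)} = ∑_j (-1)^j C(d+j, d) x^j` and `C(2m-k, k) = C(2n+k, 2n)` for `k = m - n`.
-/

open Finset PowerSeries

/-- Touchard's formula for the `n`-th straight ménage number. -/
def Vm (n : ℕ) : ℚ :=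
  ∑ k ∈ Finset.range (n + 1),
    (-1 : ℚ) ^ k * (Nat.choose (2 * n - k) k : ℚ) * ((n - k).factorial : ℚ)

namespace PowerSeries

lemma mk_neg_one_pow_mul_choose_mul_one_add_X_pow {R : Type*} [CommRing R] (d : ℕ) :
    (mk fun j => (-1 : R) ^ j * (d + j).choose d) * (1 + X) ^ (d + 1) = 1 := by
  simpa only [map_mul, map_pow, map_one, rescale_mk, map_sub, rescale_neg_one_X,
    sub_neg_eq_add] using congrArg (rescale (-1 : R)) (mk_add_choose_mul_one_sub_pow_eq_one R d)

lemma inv_one_add_X_pow_succ {K : Type*} [Field K] (d : ℕ) :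
    (1 + X : K⟦X⟧)⁻¹ ^ (d + 1) = mk fun j => (-1 : K) ^ j * (d + j).choose d := by
  have hunit : constantCoeff (1 + X : K⟦X⟧) ≠ 0 := by simp
  apply mul_left_cancel₀ (pow_ne_zero (d + 1) (ne_of_apply_ne constantCoeff hunit))
  rw [← mul_pow, PowerSeries.mul_inv_cancel _ hunit, one_pow, mul_comm,
    mk_neg_one_pow_mul_choose_mul_one_add_X_pow]

end PowerSeries

lemma Nat.choose_two_mul_sub_eq_choose_add {m n : ℕ} (h : n ≤ m) :
    (2 * m - (m - n)).choose (m - n) = (2 * n + (m - n)).choose (2 * n) := by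
  rw [show 2 * m - (m - n) = 2 * n + (m - n) by omega, Nat.choose_symm_add]

/-- `∑_{n≥0} V_n x^n = ∑_{n≥0} n! x^n/(1+x)^{2n+1}` as formal power series over `ℚ`.
The right-hand side is formally summable since its `n`-th summand is divisible by `x^n`;
its `x^m`-coefficient is the finite sum of the `x^m`-coefficients of the first `m+1`
summands, with `(1+x)⁻¹` the formal inverse of `1+x`. -/
theorem V_gf_eq :
    (PowerSeries.mk fun n => Vm n) =
      PowerSeries.mk (fun m =>
        ∑ n ∈ Finset.range (m + 1),
          (n.factorial : ℚ) *
            PowerSeries.coeff m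
              (PowerSeries.X ^ n * ((1 + PowerSeries.X : PowerSeries ℚ))⁻¹ ^ (2 * n + 1))) := by
  ext m
  rw [coeff_mk, coeff_mk, Vm, ← sum_range_reflect]
  refine sum_congr rfl fun n hn => ?_
  have hnm : n ≤ m := Nat.lt_succ_iff.mp (mem_range.mp hn)
  rw [coeff_X_pow_mul', if_pos hnm, inv_one_add_X_pow_succ, coeff_mk, Nat.add_sub_cancel,
    Nat.sub_sub_self hnm, Nat.choose_two_mul_sub_eq_choose_add hnm]
  ring
end

section
/- As formal power series over ℚ: ∑_{n≥0} U_n x^n = x + (1-x) ∑_{n≥0} n! · x^n/(1+x)^{2n+1}, where U_0 = 1, U_1 = 0, and for n ≥ 2, U_n = ∑_{k=0}^{n} (-1)^k (2n/(2n-k)) C(2n-k,k) (n-k)!. -/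
/-!
Expanding `(1 + x)^{-(2n+1)}` binomially, the `x^m`-coefficient of `∑ n! x^n / (1 + x)^{2n+1}` is
`S_m = ∑_{n ≤ m} (-1)^{m-n} C(m+n, 2n) n!`, and multiplying by `1 - x` turns it into
`S_m - S_{m-1}`.
Reindexing Touchard's sum by `n = m - k` and splitting
`2m/(m+n) · C(m+n, 2n) = C(m+n, 2n) + C(m+n-1, 2n)` shows `U_m = S_m - S_{m-1}` for `m ≥ 2`.
For `m = 1` Touchard's sum would be `-1`; the summand `x` corrects this to `U_1 = 0`.
-/
open Finset PowerSeries

/-- Touchard's formula for the ordinary ménage numbers: `U_0 = 1`, `U_1 = 0`, and for `n ≥ 2`,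
`U_n = ∑_{k=0}^n (-1)^k (2n/(2n-k)) C(2n-k,k) (n-k)!`. -/
noncomputable def Um (n : ℕ) : ℚ :=
  if n = 0 then 1 else if n = 1 then 0 else
    ∑ k ∈ Finset.range (n + 1),
      (-1 : ℚ) ^ k * ((2 * n : ℚ) / ((2 * n - k : ℕ) : ℚ)) *
        (Nat.choose (2 * n - k) k : ℚ) * ((n - k).factorial : ℚ)

theorem PowerSeries.inv_one_add_X_pow_succ_s15 {K : Type*} [Field K] (d : ℕ) :
    (1 + X : K⟦X⟧)⁻¹ ^ (d + 1) = mk fun n => (-1 : K) ^ n * (d + n).choose d := by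
  have h := congrArg (rescale (-1 : K)) (mk_add_choose_mul_one_sub_pow_eq_one K (d := d))
  rw [map_mul, map_pow, rescale_mk, map_sub, map_one, rescale_neg_one_X, sub_neg_eq_add,
    mul_comm] at h
  refine left_inv_eq_right_inv ?_ h
  rw [← mul_pow, PowerSeries.inv_mul_cancel _ (by simp), one_pow]

theorem PowerSeries.coeff_X_pow_mul_inv_one_add_X_pow_succ {K : Type*} [Field K]
    {m n : ℕ} (d : ℕ) (h : n ≤ m) :
    coeff m (X ^ n * (1 + X : K⟦X⟧)⁻¹ ^ (d + 1)) =
      (-1 : K) ^ (m - n) * (d + (m - n)).choose d := by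
  rw [inv_one_add_X_pow_succ_s15, coeff_X_pow_mul', if_pos h, coeff_mk]

theorem Nat.two_mul_div_mul_choose_eq {K : Type*} [Field K] [CharZero K] {m n : ℕ}
    (h : n ≤ m + 1) :
    2 * (m + 1 : K) / (m + 1 + n) * (m + 1 + n).choose (2 * n) =
      (m + 1 + n).choose (2 * n) + (m + n).choose (2 * n) := by
  have hchoose : ((m + n).choose (2 * n) : K) * (m + n + 1) =
      (m + n + 1).choose (2 * n) * (m + 1 - n) := by
    have := congrArg (Nat.cast (R := K)) (Nat.choose_mul_succ_eq (m + n) (2 * n))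
    push_cast [Nat.cast_sub (show 2 * n ≤ m + n + 1 by omega)] at this
    linear_combination this
  have hne : (m + 1 + n : K) ≠ 0 := by exact_mod_cast (show m + 1 + n ≠ 0 by omega)
  rw [show m + 1 + n = m + n + 1 by ring]
  field_simp
  linear_combination -hchoose

noncomputable def menageSeriesCoeff (m : ℕ) : ℚ :=
  ∑ n ∈ range (m + 1), (n.factorial : ℚ) * ((-1) ^ (m - n) * (m + n).choose (2 * n))

theorem Um_eq_sum {m : ℕ} (hm : 2 ≤ m) :
    Um m = ∑ n ∈ range (m + 1), (n.factorial : ℚ) *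
      ((-1) ^ (m - n) * (2 * m / (m + n) * (m + n).choose (2 * n))) := by
  rw [Um, if_neg (by omega), if_neg (by omega), ← sum_range_reflect]
  refine sum_congr rfl fun n hn => ?_
  have hn : n ≤ m := Nat.lt_succ_iff.mp (mem_range.mp hn)
  rw [show m + 1 - 1 - n = m - n by omega, show 2 * m - (m - n) = m + n by omega,
    show m - (m - n) = n by omega, Nat.choose_symm_of_eq_add (by omega : m + n = (m - n) + 2 * n)]
  push_cast
  ring

theorem menageSeriesCoeff_eq_neg_sum (m : ℕ) :
    menageSeriesCoeff m = -∑ n ∈ range (m + 2), (n.factorial : ℚ) *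
      ((-1) ^ (m + 1 - n) * (m + n).choose (2 * n)) := by
  rw [sum_range_succ, Nat.choose_eq_zero_of_lt (by omega : m + (m + 1) < 2 * (m + 1)),
    Nat.cast_zero, mul_zero, mul_zero, add_zero, ← sum_neg_distrib]
  refine sum_congr rfl fun n hn => ?_
  rw [Nat.sub_add_comm (Nat.lt_succ_iff.mp (mem_range.mp hn)), pow_succ]
  ring

theorem Um_eq_menageSeriesCoeff_sub (m : ℕ) :
    Um (m + 2) = menageSeriesCoeff (m + 2) - menageSeriesCoeff (m + 1) := by
  rw [show m + 2 = m + 1 + 1 from rfl, Um_eq_sum (by omega),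
    menageSeriesCoeff_eq_neg_sum (m + 1), sub_neg_eq_add, menageSeriesCoeff, ← sum_add_distrib]
  refine sum_congr rfl fun n hn => ?_
  have hsplit := Nat.two_mul_div_mul_choose_eq (K := ℚ) (Nat.lt_succ_iff.mp (mem_range.mp hn))
  push_cast at hsplit ⊢
  rw [hsplit]
  ring

/-- `∑_{n≥0} U_n x^n = x + (1-x) ∑_{n≥0} n! x^n/(1+x)^{2n+1}` as formal power series over `ℚ`.
The right-hand infinite sum is formally summable since its `n`-th summand is divisible by
`x^n`; it is the power series whose `x^m`-coefficient is the finite sum of the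
`x^m`-coefficients of the first `m+1` summands, with `(1+x)⁻¹` the formal inverse of `1+x`. -/
theorem U_gf_eq :
    (PowerSeries.mk fun n => Um n) =
      PowerSeries.X + (1 - PowerSeries.X) *
        PowerSeries.mk (fun m =>
          ∑ n ∈ Finset.range (m + 1),
            (n.factorial : ℚ) *
              PowerSeries.coeff (R := ℚ) m
                (PowerSeries.X ^ n *
                  ((1 + PowerSeries.X : PowerSeries ℚ))⁻¹ ^ (2 * n + 1))) := by
  have hseries : (mk fun m => ∑ n ∈ range (m + 1), (n.factorial : ℚ) *
      coeff m (X ^ n * (1 + X : ℚ⟦X⟧)⁻¹ ^ (2 * n + 1))) = mk menageSeriesCoeff := by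
    ext m
    rw [coeff_mk, coeff_mk, menageSeriesCoeff]
    refine sum_congr rfl fun n hn => ?_
    have hn : n ≤ m := Nat.lt_succ_iff.mp (mem_range.mp hn)
    rw [coeff_X_pow_mul_inv_one_add_X_pow_succ _ hn, show 2 * n + (m - n) = m + n by omega]
  rw [hseries]
  ext m
  rcases m with _ | _ | m
  · simp [Um, menageSeriesCoeff]
  · simp [Um, menageSeriesCoeff, sub_mul, coeff_succ_X_mul, sum_range_succ]
  · simp [Um_eq_menageSeriesCoeff_sub, sub_mul, coeff_succ_X_mul, coeff_X]
end

section
/- For every n ≥ 1, the number of permutations π of {1,...,n} that can be reduced to the empty permutation by repeatedly removing fixed points and gluing successions {i, i+1} (pairs with π(i) = i+1) equals the Catalan number C_n. -/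
open Finset

/-- The `n`-th Catalan number `C_n = (2n)!/(n!(n+1)!)` (the division is exact). -/
def cat (n : ℕ) : ℕ := (2 * n).factorial / (n.factorial * (n + 1).factorial)

/-- `π' ∈ S_n` is obtained from `π ∈ S_{n+1}` by a reduction of type 1: removing the fixed
point `i` (the remaining points, read via `i.succAbove`, are renumbered by decreasing the
values above `i` by one). -/
def IsType1Reduct {n : ℕ} (π : Equiv.Perm (Fin (n + 1))) (i : Fin (n + 1))
    (π' : Equiv.Perm (Fin n)) : Prop :=
  π i = i ∧ ∀ j : Fin n,
    (π' j : ℕ) = if (π (i.succAbove j) : ℕ) < (i : ℕ)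
      then (π (i.succAbove j) : ℕ) else (π (i.succAbove j) : ℕ) - 1

/-- `π' ∈ S_n` is obtained from `π ∈ S_{n+1}` by a reduction of type 2: gluing the
succession `{i, i+1}` (with `π i = i + 1`) together. -/
def IsType2Reduct {n : ℕ} (π : Equiv.Perm (Fin (n + 1))) (i : Fin (n + 1))
    (π' : Equiv.Perm (Fin n)) : Prop :=
  (π i : ℕ) = (i : ℕ) + 1 ∧ ∀ j : Fin n,
    (π' j : ℕ) = if (π (i.succAbove j) : ℕ) ≤ (i : ℕ)
      then (π (i.succAbove j) : ℕ) else (π (i.succAbove j) : ℕ) - 1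

/-- `Reducible n π` holds when `π` can be reduced to the empty permutation by a sequence of
reductions of type 1 (removing a fixed point) and type 2 (gluing a succession). -/
inductive Reducible : (n : ℕ) → Equiv.Perm (Fin n) → Prop
  | empty (π : Equiv.Perm (Fin 0)) : Reducible 0 π
  | step1 {n : ℕ} (π : Equiv.Perm (Fin (n + 1))) (i : Fin (n + 1))
      (π' : Equiv.Perm (Fin n)) :
      IsType1Reduct π i π' → Reducible n π' → Reducible (n + 1) π
  | step2 {n : ℕ} (π : Equiv.Perm (Fin (n + 1))) (i : Fin (n + 1))
      (π' : Equiv.Perm (Fin n)) :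
      IsType2Reduct π i π' → Reducible n π' → Reducible (n + 1) π

namespace CatProof

open Equiv

/-- coercion formula for succAbove -/
lemma succAbove_coe {n : ℕ} (i : Fin (n + 1)) (j : Fin n) :
    ((i.succAbove j : Fin (n + 1)) : ℕ) = if (j : ℕ) < (i : ℕ) then (j : ℕ) else (j : ℕ) + 1 := by
  rw [Fin.succAbove]
  split_ifs with h1 h2 h2
  · rfl
  · exact absurd (by simpa [Fin.lt_def] using h1) h2
  · exact absurd (by simpa [Fin.lt_def] using h2) h1
  · rfl

/-- change the size of a permutation along an equality -/
def recast {a b : ℕ} (h : a = b) (π : Equiv.Perm (Fin a)) : Equiv.Perm (Fin b) :=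
  (finCongr h).permCongr π

@[simp] lemma recast_coe {a b : ℕ} (h : a = b) (π : Equiv.Perm (Fin a)) (x : Fin b) :
    ((recast h π x : Fin b) : ℕ) = (π (Fin.cast h.symm x) : ℕ) := by
  simp [recast, Equiv.permCongr_apply]

@[simp] lemma recast_rfl {a : ℕ} (π : Equiv.Perm (Fin a)) : recast rfl π = π := by
  ext x
  simp [recast, Equiv.permCongr_apply]

/-- insert a fixed point at position `i` -/
def ins1 {n : ℕ} (i : Fin (n + 1)) (π' : Equiv.Perm (Fin n)) : Equiv.Perm (Fin (n + 1)) :=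
  (finSuccEquiv' i).symm.permCongr π'.optionCongr

@[simp] lemma ins1_apply_self {n : ℕ} (i : Fin (n + 1)) (π' : Equiv.Perm (Fin n)) :
    ins1 i π' i = i := by
  simp [ins1, Equiv.permCongr_apply, finSuccEquiv'_at, finSuccEquiv'_symm_none]

@[simp] lemma ins1_apply_succAbove {n : ℕ} (i : Fin (n + 1)) (π' : Equiv.Perm (Fin n))
    (j : Fin n) : ins1 i π' (i.succAbove j) = i.succAbove (π' j) := by
  simp [ins1, Equiv.permCongr_apply, finSuccEquiv'_succAbove, finSuccEquiv'_symm_some]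

/-- split position `i` into the succession `i, i+1` -/
def ins2 {n : ℕ} (i : Fin n) (π' : Equiv.Perm (Fin n)) : Equiv.Perm (Fin (n + 1)) :=
  Equiv.swap i.castSucc i.succ * ins1 i.castSucc π'

lemma exists1 {n : ℕ} (i : Fin (n + 1)) (π' : Equiv.Perm (Fin n)) :
    IsType1Reduct (ins1 i π') i π' := by
  refine ⟨ins1_apply_self i π', fun j => ?_⟩
  rw [ins1_apply_succAbove, succAbove_coe]
  split_ifs with h1 h2 h2 <;> omega

lemma ins2_self_coe {n : ℕ} (i : Fin n) (π' : Equiv.Perm (Fin n)) :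
    ((ins2 i π') i.castSucc : ℕ) = (i : ℕ) + 1 := by
  rw [ins2, Equiv.Perm.mul_apply, ins1_apply_self, Equiv.swap_apply_left]
  rfl

lemma ins2_coe {n : ℕ} (i : Fin n) (π' : Equiv.Perm (Fin n)) (j : Fin n) :
    ((ins2 i π') (i.castSucc.succAbove j) : ℕ) =
      if (π' j : ℕ) ≤ (i : ℕ) then (π' j : ℕ) else (π' j : ℕ) + 1 := by
  rw [ins2, Equiv.Perm.mul_apply, ins1_apply_succAbove]
  have hcs : (i.castSucc : ℕ) = (i : ℕ) := rfl
  have hs : (i.succ : ℕ) = (i : ℕ) + 1 := rfl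
  rcases eq_or_ne (π' j) i with he | hne
  · have h : i.castSucc.succAbove (π' j) = i.succ := by
      rw [he, Fin.succAbove_of_le_castSucc _ _ (le_refl _)]
    rw [h, Equiv.swap_apply_right, hcs, he, if_pos (le_refl _)]
  · have h1 : i.castSucc.succAbove (π' j) ≠ i.castSucc := Fin.succAbove_ne _ _
    have hne' : (π' j : ℕ) ≠ (i : ℕ) := fun hc => hne (Fin.ext hc)
    have h2 : i.castSucc.succAbove (π' j) ≠ i.succ := by
      intro hc
      have := congrArg (fun x : Fin (n+1) => (x : ℕ)) hc
      simp only [succAbove_coe, hs, hcs] at this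
      split_ifs at this <;> omega
    rw [Equiv.swap_apply_of_ne_of_ne h1 h2, succAbove_coe, hcs]
    split_ifs with g1 g2 g2 <;> omega

lemma exists2 {n : ℕ} (i : Fin n) (π' : Equiv.Perm (Fin n)) :
    IsType2Reduct (ins2 i π') i.castSucc π' := by
  have hcs : (i.castSucc : ℕ) = (i : ℕ) := rfl
  refine ⟨by rw [ins2_self_coe, hcs], fun j => ?_⟩
  rw [ins2_coe, hcs]
  split_ifs with g1 g2 g2 <;> omega

/-- uniqueness of un-reduction, type 1 -/
lemma unique1 {n : ℕ} {π ρ : Equiv.Perm (Fin (n + 1))} {i : Fin (n + 1)}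
    {π' : Equiv.Perm (Fin n)} (hπ : IsType1Reduct π i π') (hρ : IsType1Reduct ρ i π') :
    π = ρ := by
  obtain ⟨hπi, hπe⟩ := hπ
  obtain ⟨hρi, hρe⟩ := hρ
  ext x
  rcases eq_or_ne x i with rfl | hx
  · rw [hπi, hρi]
  · obtain ⟨j, rfl⟩ := Fin.exists_succAbove_eq hx
    have h1 := hπe j
    have h2 := hρe j
    have hne1 : (π (i.succAbove j) : ℕ) ≠ (i : ℕ) := by
      intro hc
      exact Fin.succAbove_ne i j (π.injective ((Fin.ext (hc.trans (congrArg (fun x : Fin (n+1) => (x:ℕ)) hπi).symm)) : π (i.succAbove j) = π i))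
    have hne2 : (ρ (i.succAbove j) : ℕ) ≠ (i : ℕ) := by
      intro hc
      exact Fin.succAbove_ne i j (ρ.injective ((Fin.ext (hc.trans (congrArg (fun x : Fin (n+1) => (x:ℕ)) hρi).symm)) : ρ (i.succAbove j) = ρ i))
    split_ifs at h1 h2 <;> omega

/-- uniqueness of un-reduction, type 2 -/
lemma unique2 {n : ℕ} {π ρ : Equiv.Perm (Fin (n + 1))} {i : Fin (n + 1)}
    {π' : Equiv.Perm (Fin n)} (hπ : IsType2Reduct π i π') (hρ : IsType2Reduct ρ i π') :
    π = ρ := by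
  obtain ⟨hπi, hπe⟩ := hπ
  obtain ⟨hρi, hρe⟩ := hρ
  ext x
  rcases eq_or_ne x i with rfl | hx
  · rw [hπi, hρi]
  · obtain ⟨j, rfl⟩ := Fin.exists_succAbove_eq hx
    have h1 := hπe j
    have h2 := hρe j
    have hne1 : (π (i.succAbove j) : ℕ) ≠ (i : ℕ) + 1 := by
      intro hc
      exact Fin.succAbove_ne i j (π.injective ((Fin.ext (hc.trans hπi.symm)) : π (i.succAbove j) = π i))
    have hne2 : (ρ (i.succAbove j) : ℕ) ≠ (i : ℕ) + 1 := by
      intro hc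
      exact Fin.succAbove_ne i j (ρ.injective ((Fin.ext (hc.trans hρi.symm)) : ρ (i.succAbove j) = ρ i))
    split_ifs at h1 h2 <;> omega


/-- juxtaposition of two permutations -/
def blockSum {k m : ℕ} (α : Equiv.Perm (Fin k)) (β : Equiv.Perm (Fin m)) :
    Equiv.Perm (Fin (k + m)) :=
  finSumFinEquiv.permCongr (α.sumCongr β)

lemma blockSum_coe_left {k m : ℕ} (α : Equiv.Perm (Fin k)) (β : Equiv.Perm (Fin m))
    (s : Fin k) (x : Fin (k + m)) (hx : (x : ℕ) = (s : ℕ)) :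
    (blockSum α β x : ℕ) = (α s : ℕ) := by
  have hxx : x = Fin.castAdd m s := Fin.ext (by simpa using hx)
  subst hxx
  simp [blockSum, Equiv.permCongr_apply]

lemma blockSum_coe_right {k m : ℕ} (α : Equiv.Perm (Fin k)) (β : Equiv.Perm (Fin m))
    (t : Fin m) (x : Fin (k + m)) (hx : (x : ℕ) = k + (t : ℕ)) :
    (blockSum α β x : ℕ) = k + (β t : ℕ) := by
  have hxx : x = Fin.natAdd k t := Fin.ext (by simpa using hx)
  subst hxx
  simp [blockSum, Equiv.permCongr_apply]

/-- the glue point -/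
def gp (k m : ℕ) : Fin ((k + 1) + m) :=
  ⟨if m = 0 then 0 else k + 1, by split <;> omega⟩

/-- `assemble σ τ` is the permutation of `{0, 1, ..., k+m}` which acts as `σ` on
`{1, ..., k}` and on `{0} ∪ {k+1, ..., k+m}` acts as the "augmentation" of `τ`:
`0 ↦ k+1` (if `m > 0`) and `k+1+t ↦ k+1+τ(t)` except that the point mapped by `τ` to `0`
is sent to `0`. -/
def assemble {k m : ℕ} (σ : Equiv.Perm (Fin k)) (τ : Equiv.Perm (Fin m)) :
    Equiv.Perm (Fin (k + m + 1)) :=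
  recast (by omega) (Equiv.swap ⟨0, by omega⟩ (gp k m) * blockSum (ins1 0 σ) τ)

lemma ins1_zero_coe {k : ℕ} (σ : Equiv.Perm (Fin k)) (x : Fin (k + 1)) :
    ((ins1 0 σ x : Fin (k + 1)) : ℕ) =
      if hx : (x : ℕ) = 0 then 0 else (σ ⟨(x : ℕ) - 1, by omega⟩ : ℕ) + 1 := by
  split_ifs with hx
  · have : x = 0 := Fin.ext hx
    subst this
    rw [ins1_apply_self]
    rfl
  · set j : Fin k := ⟨(x : ℕ) - 1, by omega⟩ with hj
    have hsa : (0 : Fin (k+1)).succAbove j = x := by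
      apply Fin.ext
      rw [succAbove_coe]
      simp [hj]
      omega
    rw [← hsa, ins1_apply_succAbove, succAbove_coe]
    simp

lemma assemble_coe_zero {k m : ℕ} (σ : Equiv.Perm (Fin k)) (τ : Equiv.Perm (Fin m))
    (x : Fin (k + m + 1)) (hx : (x : ℕ) = 0) :
    (assemble σ τ x : ℕ) = if m = 0 then 0 else k + 1 := by
  rw [assemble, recast_coe, Equiv.Perm.mul_apply]
  have h0 : (blockSum (ins1 0 σ) τ (Fin.cast (by omega) x) : ℕ) = 0 := by
    rw [blockSum_coe_left (s := ⟨0, by omega⟩)]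
    · rw [ins1_zero_coe]; simp
    · simpa using hx
  have hb : blockSum (ins1 0 σ) τ (Fin.cast (by omega) x) = ⟨0, by omega⟩ := Fin.ext h0
  rw [hb, Equiv.swap_apply_left]
  rfl

lemma assemble_coe_mid {k m : ℕ} (σ : Equiv.Perm (Fin k)) (τ : Equiv.Perm (Fin m))
    (s : Fin k) (x : Fin (k + m + 1)) (hx : (x : ℕ) = 1 + (s : ℕ)) :
    (assemble σ τ x : ℕ) = 1 + (σ s : ℕ) := by
  rw [assemble, recast_coe, Equiv.Perm.mul_apply]
  have h0 : (blockSum (ins1 0 σ) τ (Fin.cast (by omega) x) : ℕ) = (σ s : ℕ) + 1 := by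
    rw [blockSum_coe_left (s := ⟨1 + (s : ℕ), by omega⟩)]
    · rw [ins1_zero_coe]
      have hs : (1 : ℕ) + (s : ℕ) - 1 = (s : ℕ) := by omega
      simp only [dif_neg (by omega : ¬((1 : ℕ) + (s:ℕ) = 0))]
      have : (⟨1 + (s : ℕ) - 1, by omega⟩ : Fin k) = s := by
        apply Fin.ext
        show 1 + (s : ℕ) - 1 = (s : ℕ)
        omega
      rw [this]
    · simpa using hx
  have hb : blockSum (ins1 0 σ) τ (Fin.cast (by omega) x)
      = ⟨(σ s : ℕ) + 1, by omega⟩ := Fin.ext h0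
  rw [hb]
  rw [Equiv.swap_apply_of_ne_of_ne]
  · omega
  · intro hc
    have := congrArg (fun y : Fin ((k+1)+m) => (y : ℕ)) hc
    simp at this
  · intro hc
    have := congrArg (fun y : Fin ((k+1)+m) => (y : ℕ)) hc
    simp only [gp] at this
    have hsl := (σ s).isLt
    split_ifs at this <;> omega

lemma assemble_coe_right {k m : ℕ} (σ : Equiv.Perm (Fin k)) (τ : Equiv.Perm (Fin m))
    (t : Fin m) (x : Fin (k + m + 1)) (hx : (x : ℕ) = k + 1 + (t : ℕ)) :
    (assemble σ τ x : ℕ) = if (τ t : ℕ) = 0 then 0 else k + 1 + (τ t : ℕ) := by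
  rw [assemble, recast_coe, Equiv.Perm.mul_apply]
  have h0 : (blockSum (ins1 0 σ) τ (Fin.cast (by omega) x) : ℕ) = (k + 1) + (τ t : ℕ) := by
    rw [blockSum_coe_right (t := t)]
    simpa using hx
  have hb : blockSum (ins1 0 σ) τ (Fin.cast (by omega) x)
      = ⟨k + 1 + (τ t : ℕ), by omega⟩ := Fin.ext h0
  rw [hb]
  have hm : m ≠ 0 := by
    intro h; subst h; exact absurd t.isLt (by omega)
  rcases eq_or_ne ((τ t : ℕ)) 0 with h0' | h0'
  · have heq : (⟨k + 1 + (τ t : ℕ), by omega⟩ : Fin ((k+1)+m)) = gp k m := by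
      apply Fin.ext
      show k + 1 + (τ t : ℕ) = if m = 0 then 0 else k + 1
      rw [if_neg hm, h0']
    rw [heq, Equiv.swap_apply_right, if_pos h0']
  · rw [Equiv.swap_apply_of_ne_of_ne, if_neg h0']
    · intro hc
      have := congrArg (fun y : Fin ((k+1)+m) => (y : ℕ)) hc
      simp at this
    · intro hc
      have := congrArg (fun y : Fin ((k+1)+m) => (y : ℕ)) hc
      simp only [gp, if_neg hm] at this
      omega

/-- trichotomy of positions -/
lemma tri {k m : ℕ} (x : Fin (k + m + 1)) :
    (x : ℕ) = 0 ∨ (∃ s : Fin k, (x : ℕ) = 1 + (s : ℕ)) ∨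
      (∃ t : Fin m, (x : ℕ) = k + 1 + (t : ℕ)) := by
  have hx := x.isLt
  rcases Nat.eq_zero_or_pos (x : ℕ) with h | h
  · exact Or.inl h
  rcases Nat.lt_or_ge (x : ℕ) (k + 1) with h2 | h2
  · exact Or.inr (Or.inl ⟨⟨(x : ℕ) - 1, by omega⟩, by simp; omega⟩)
  · exact Or.inr (Or.inr ⟨⟨(x : ℕ) - k - 1, by omega⟩, by simp; omega⟩)


@[simp] lemma recast_recast {a b c : ℕ} (h1 : a = b) (h2 : b = c) (π : Equiv.Perm (Fin a)) :
    recast h2 (recast h1 π) = recast (h1.trans h2) π := by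
  subst h1; subst h2; simp

lemma recast_self {a : ℕ} (h : a = a) (π : Equiv.Perm (Fin a)) : recast h π = π :=
  recast_rfl π

/-- noncrossing permutations with increasing cycles, defined via the first-return
decomposition -/
inductive NC : (n : ℕ) → Equiv.Perm (Fin n) → Prop
  | nil (π : Equiv.Perm (Fin 0)) : NC 0 π
  | cons {k m n : ℕ} (h : k + m + 1 = n) (σ : Equiv.Perm (Fin k)) (τ : Equiv.Perm (Fin m)) :
      NC k σ → NC m τ → NC n (recast h (assemble σ τ))

lemma nc_recast {a b : ℕ} {π : Equiv.Perm (Fin a)} (hπ : NC a π) (h : a = b) :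
    NC b (recast h π) := by
  subst h; rwa [recast_rfl]

lemma red_recast {a b : ℕ} {π : Equiv.Perm (Fin a)} (hπ : Reducible a π) (h : a = b) :
    Reducible b (recast h π) := by
  subst h; rwa [recast_rfl]

lemma red1_transfer {a b : ℕ} (h : a = b) {π : Equiv.Perm (Fin (a + 1))} {i : Fin (a + 1)}
    {π' : Equiv.Perm (Fin a)} (hr : IsType1Reduct π i π') :
    IsType1Reduct (recast (by rw [h]) π) (Fin.cast (by rw [h]) i) (recast h π') := by
  subst h
  simpa [recast_self] using hr

lemma red2_transfer {a b : ℕ} (h : a = b) {π : Equiv.Perm (Fin (a + 1))} {i : Fin (a + 1)}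
    {π' : Equiv.Perm (Fin a)} (hr : IsType2Reduct π i π') :
    IsType2Reduct (recast (by rw [h]) π) (Fin.cast (by rw [h]) i) (recast h π') := by
  subst h
  simpa [recast_self] using hr

/-- lifting a type-1 reduction of the `σ` part -/
lemma K1 {k m : ℕ} {σp : Equiv.Perm (Fin (k + 1))} {σ : Equiv.Perm (Fin k)}
    (τ : Equiv.Perm (Fin m)) {j : Fin (k + 1)} (hred : IsType1Reduct σp j σ) :
    IsType1Reduct (recast (by omega : (k + 1) + m + 1 = (k + m + 1) + 1) (assemble σp τ))
      ⟨1 + (j : ℕ), by omega⟩ (assemble σ τ) := by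
  obtain ⟨h1, h2⟩ := hred
  have hjk : (j : ℕ) ≤ k := by omega
  constructor
  · apply Fin.ext
    rw [recast_coe]
    rw [assemble_coe_mid σp τ j _ (by simp)]
    rw [h1]
  · intro x
    have hyc : (((⟨1 + (j : ℕ), by omega⟩ : Fin ((k + m + 1) + 1)).succAbove x : Fin ((k + m + 1) + 1)) : ℕ)
        = if (x : ℕ) < 1 + (j : ℕ) then (x : ℕ) else (x : ℕ) + 1 := succAbove_coe _ x
    rw [recast_coe]
    rcases tri x with hx | ⟨s, hx⟩ | ⟨t, hx⟩
    · rw [assemble_coe_zero σ τ x hx,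
        assemble_coe_zero σp τ _ (by rw [Fin.coe_cast, hyc]; split_ifs <;> omega)]
      simp only [Fin.val_mk]
      split_ifs <;> omega
    · have hsa : ((j.succAbove s : Fin (k + 1)) : ℕ) = if (s : ℕ) < (j : ℕ) then (s : ℕ) else (s : ℕ) + 1 :=
        succAbove_coe j s
      rw [assemble_coe_mid σ τ s x hx,
        assemble_coe_mid σp τ (j.succAbove s) _ (by rw [Fin.coe_cast, hyc, hsa]; split_ifs <;> omega)]
      have hv := h2 s
      have hne : (σp (j.succAbove s) : ℕ) ≠ (j : ℕ) := by
        intro hc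
        exact Fin.succAbove_ne j s (σp.injective (Fin.ext (hc.trans (congrArg (fun y : Fin (k+1) => (y : ℕ)) h1).symm)))
      simp only [Fin.val_mk]
      split_ifs at hv ⊢ <;> omega
    · rw [assemble_coe_right σ τ t x hx,
        assemble_coe_right σp τ t _ (by rw [Fin.coe_cast, hyc]; split_ifs <;> omega)]
      simp only [Fin.val_mk]
      split_ifs <;> omega

/-- lifting a type-2 reduction of the `σ` part -/
lemma K2 {k m : ℕ} {σp : Equiv.Perm (Fin (k + 1))} {σ : Equiv.Perm (Fin k)}
    (τ : Equiv.Perm (Fin m)) {j : Fin (k + 1)} (hred : IsType2Reduct σp j σ) :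
    IsType2Reduct (recast (by omega : (k + 1) + m + 1 = (k + m + 1) + 1) (assemble σp τ))
      ⟨1 + (j : ℕ), by omega⟩ (assemble σ τ) := by
  obtain ⟨h1, h2⟩ := hred
  have hjk : (j : ℕ) ≤ k := by omega
  constructor
  · rw [recast_coe]
    rw [assemble_coe_mid σp τ j _ (by simp)]
    simp only [h1]
    omega
  · intro x
    have hyc : (((⟨1 + (j : ℕ), by omega⟩ : Fin ((k + m + 1) + 1)).succAbove x : Fin ((k + m + 1) + 1)) : ℕ)
        = if (x : ℕ) < 1 + (j : ℕ) then (x : ℕ) else (x : ℕ) + 1 := succAbove_coe _ x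
    rw [recast_coe]
    rcases tri x with hx | ⟨s, hx⟩ | ⟨t, hx⟩
    · rw [assemble_coe_zero σ τ x hx,
        assemble_coe_zero σp τ _ (by rw [Fin.coe_cast, hyc]; split_ifs <;> omega)]
      simp only [Fin.val_mk]
      split_ifs <;> omega
    · have hsa : ((j.succAbove s : Fin (k + 1)) : ℕ) = if (s : ℕ) < (j : ℕ) then (s : ℕ) else (s : ℕ) + 1 :=
        succAbove_coe j s
      rw [assemble_coe_mid σ τ s x hx,
        assemble_coe_mid σp τ (j.succAbove s) _ (by rw [Fin.coe_cast, hyc, hsa]; split_ifs <;> omega)]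
      have hv := h2 s
      have hne : (σp (j.succAbove s) : ℕ) ≠ (j : ℕ) + 1 := by
        intro hc
        exact Fin.succAbove_ne j s (σp.injective (Fin.ext (hc.trans h1.symm)))
      simp only [Fin.val_mk]
      split_ifs at hv ⊢ <;> omega
    · rw [assemble_coe_right σ τ t x hx,
        assemble_coe_right σp τ t _ (by rw [Fin.coe_cast, hyc]; split_ifs <;> omega)]
      simp only [Fin.val_mk]
      split_ifs <;> omega

/-- lifting a type-1 reduction of the `τ` part (away from its distinguished first point) -/
lemma K3 {k m : ℕ} (σ : Equiv.Perm (Fin k)) {τp : Equiv.Perm (Fin (m + 1))}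
    {τ : Equiv.Perm (Fin m)} {j : Fin (m + 1)} (hred : IsType1Reduct τp j τ)
    (hj1 : 1 ≤ (j : ℕ)) :
    IsType1Reduct (recast (by omega : k + (m + 1) + 1 = (k + m + 1) + 1) (assemble σ τp))
      ⟨k + 1 + (j : ℕ), by omega⟩ (assemble σ τ) := by
  obtain ⟨h1, h2⟩ := hred
  have hjm : (j : ℕ) ≤ m := by omega
  have hm1 : 1 ≤ m := by omega
  constructor
  · apply Fin.ext
    rw [recast_coe]
    rw [assemble_coe_right σ τp j _ (by simp)]
    rw [h1]
    have : ¬ ((j : ℕ) = 0) := by omega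
    rw [if_neg this]
  · intro x
    have hyc : (((⟨k + 1 + (j : ℕ), by omega⟩ : Fin ((k + m + 1) + 1)).succAbove x : Fin ((k + m + 1) + 1)) : ℕ)
        = if (x : ℕ) < k + 1 + (j : ℕ) then (x : ℕ) else (x : ℕ) + 1 := succAbove_coe _ x
    rw [recast_coe]
    rcases tri x with hx | ⟨s, hx⟩ | ⟨t, hx⟩
    · rw [assemble_coe_zero σ τ x hx,
        assemble_coe_zero σ τp _ (by rw [Fin.coe_cast, hyc]; split_ifs <;> omega)]
      rw [if_neg (by omega : ¬ (m = 0)), if_neg (by omega : ¬ (m + 1 = 0))]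
      simp only [Fin.val_mk]
      split_ifs <;> omega
    · rw [assemble_coe_mid σ τ s x hx,
        assemble_coe_mid σ τp s _ (by rw [Fin.coe_cast, hyc]; split_ifs <;> omega)]
      have := (σ s).isLt
      simp only [Fin.val_mk]
      split_ifs <;> omega
    · have hsa : ((j.succAbove t : Fin (m + 1)) : ℕ) = if (t : ℕ) < (j : ℕ) then (t : ℕ) else (t : ℕ) + 1 :=
        succAbove_coe j t
      rw [assemble_coe_right σ τ t x hx,
        assemble_coe_right σ τp (j.succAbove t) _ (by rw [Fin.coe_cast, hyc, hsa]; split_ifs <;> omega)]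
      have hv := h2 t
      have hne : (τp (j.succAbove t) : ℕ) ≠ (j : ℕ) := by
        intro hc
        exact Fin.succAbove_ne j t (τp.injective (Fin.ext (hc.trans (congrArg (fun y : Fin (m+1) => (y : ℕ)) h1).symm)))
      simp only [Fin.val_mk]
      split_ifs at hv ⊢ <;> omega

/-- lifting a type-2 reduction of the `τ` part -/
lemma K4 {k m : ℕ} (σ : Equiv.Perm (Fin k)) {τp : Equiv.Perm (Fin (m + 1))}
    {τ : Equiv.Perm (Fin m)} {j : Fin (m + 1)} (hred : IsType2Reduct τp j τ) :
    IsType2Reduct (recast (by omega : k + (m + 1) + 1 = (k + m + 1) + 1) (assemble σ τp))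
      ⟨k + 1 + (j : ℕ), by omega⟩ (assemble σ τ) := by
  obtain ⟨h1, h2⟩ := hred
  have hjm : (j : ℕ) + 1 ≤ m := by
    have := (τp j).isLt
    omega
  constructor
  · rw [recast_coe]
    rw [assemble_coe_right σ τp j _ (by simp)]
    rw [h1, if_neg (by omega : ¬ ((j : ℕ) + 1 = 0))]
    simp only [Fin.val_mk]
    omega
  · intro x
    have hyc : (((⟨k + 1 + (j : ℕ), by omega⟩ : Fin ((k + m + 1) + 1)).succAbove x : Fin ((k + m + 1) + 1)) : ℕ)
        = if (x : ℕ) < k + 1 + (j : ℕ) then (x : ℕ) else (x : ℕ) + 1 := succAbove_coe _ x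
    rw [recast_coe]
    rcases tri x with hx | ⟨s, hx⟩ | ⟨t, hx⟩
    · rw [assemble_coe_zero σ τ x hx,
        assemble_coe_zero σ τp _ (by rw [Fin.coe_cast, hyc]; split_ifs <;> omega)]
      rw [if_neg (by omega : ¬ (m = 0)), if_neg (by omega : ¬ (m + 1 = 0))]
      simp only [Fin.val_mk]
      split_ifs <;> omega
    · rw [assemble_coe_mid σ τ s x hx,
        assemble_coe_mid σ τp s _ (by rw [Fin.coe_cast, hyc]; split_ifs <;> omega)]
      have := (σ s).isLt
      simp only [Fin.val_mk]
      split_ifs <;> omega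
    · have hsa : ((j.succAbove t : Fin (m + 1)) : ℕ) = if (t : ℕ) < (j : ℕ) then (t : ℕ) else (t : ℕ) + 1 :=
        succAbove_coe j t
      rw [assemble_coe_right σ τ t x hx,
        assemble_coe_right σ τp (j.succAbove t) _ (by rw [Fin.coe_cast, hyc, hsa]; split_ifs <;> omega)]
      have hv := h2 t
      have hne : (τp (j.succAbove t) : ℕ) ≠ (j : ℕ) + 1 := by
        intro hc
        exact Fin.succAbove_ne j t (τp.injective (Fin.ext (hc.trans h1.symm)))
      simp only [Fin.val_mk]
      split_ifs at hv ⊢ <;> omega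

/-- un-reducing by inserting a fixed point at position 0 -/
lemma K0a {n : ℕ} (π' : Equiv.Perm (Fin n)) :
    IsType1Reduct (assemble π' (1 : Equiv.Perm (Fin 0))) ⟨0, by omega⟩ π' := by
  constructor
  · apply Fin.ext
    rw [assemble_coe_zero π' 1 _ rfl, if_pos rfl]
  · intro x
    have hyc : (((⟨0, by omega⟩ : Fin (n + 0 + 1)).succAbove x : Fin (n + 0 + 1)) : ℕ)
        = if (x : ℕ) < 0 then (x : ℕ) else (x : ℕ) + 1 := succAbove_coe _ x
    rw [assemble_coe_mid π' 1 x _ (by rw [hyc]; split_ifs <;> omega)]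
    simp only [Fin.val_mk]
    split_ifs <;> omega

/-- un-reducing by splitting position 0 into a succession -/
lemma K0b {n : ℕ} (π' : Equiv.Perm (Fin (n + 1))) :
    IsType2Reduct (recast (by omega : 0 + (n + 1) + 1 = (n + 1) + 1)
      (assemble (1 : Equiv.Perm (Fin 0)) π')) ⟨0, by omega⟩ π' := by
  constructor
  · rw [recast_coe]
    rw [assemble_coe_zero 1 π' _ (by simp)]
    rw [if_neg (by omega)]
  · intro x
    have hyc : (((⟨0, by omega⟩ : Fin ((n + 1) + 1)).succAbove x : Fin ((n + 1) + 1)) : ℕ)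
        = if (x : ℕ) < 0 then (x : ℕ) else (x : ℕ) + 1 := succAbove_coe _ x
    rw [recast_coe]
    rw [assemble_coe_right 1 π' x _ (by rw [Fin.coe_cast, hyc]; split_ifs <;> omega)]
    simp only [Fin.val_mk]
    split_ifs <;> omega


lemma red_assemble {m : ℕ} {τ : Equiv.Perm (Fin m)} (hτ : Reducible m τ)
    {k : ℕ} {σ : Equiv.Perm (Fin k)} (hσ : Reducible k σ) :
    Reducible (k + m + 1) (assemble σ τ) := by
  induction hσ with
  | empty σ0 =>
    cases m with
    | zero =>
      have hτ1 : τ = (1 : Equiv.Perm (Fin 0)) := Subsingleton.elim _ _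
      subst hτ1
      exact Reducible.step1 _ ⟨0, by omega⟩ σ0 (K0a σ0) (Reducible.empty σ0)
    | succ m' =>
      have hstep := Reducible.step2 _ ⟨0, by omega⟩ τ (K0b (n := m') τ) hτ
      have := red_recast hstep (by omega : (m' + 1) + 1 = 0 + (m' + 1) + 1)
      rw [recast_recast, recast_self] at this
      rwa [Subsingleton.elim σ0 (1 : Equiv.Perm (Fin 0))]
  | step1 σp i σ' hred hσ' ih =>
    rename_i k'
    have hk1 := K1 τ hred
    have hstep := Reducible.step1 _ _ _ hk1 ih
    have := red_recast hstep (by omega : (k' + m + 1) + 1 = (k' + 1) + m + 1)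
    rwa [recast_recast, recast_self] at this
  | step2 σp i σ' hred hσ' ih =>
    rename_i k'
    have hk2 := K2 τ hred
    have hstep := Reducible.step2 _ _ _ hk2 ih
    have := red_recast hstep (by omega : (k' + m + 1) + 1 = (k' + 1) + m + 1)
    rwa [recast_recast, recast_self] at this

lemma nc_reducible {n : ℕ} {π : Equiv.Perm (Fin n)} (h : NC n π) : Reducible n π := by
  induction h with
  | nil π0 => exact Reducible.empty π0
  | cons h σ τ hσ hτ ihσ ihτ =>
    subst h
    rw [recast_rfl]
    exact red_assemble ihτ ihσ

/-- `NC` is closed under un-doing a type-1 reduction -/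
lemma nc_unred1 {n : ℕ} {π' : Equiv.Perm (Fin n)} (h : NC n π') :
    ∀ {π : Equiv.Perm (Fin (n + 1))} {i : Fin (n + 1)},
      IsType1Reduct π i π' → NC (n + 1) π := by
  induction h with
  | nil π0 =>
    intro π i hred
    have hi : i = ⟨0, Nat.succ_pos _⟩ := Fin.ext (by have := i.isLt; omega)
    rw [hi] at hred
    have heq : π = assemble π0 (1 : Equiv.Perm (Fin 0)) := unique1 hred (K0a π0)
    subst heq
    have := NC.cons (k := 0) (m := 0) (n := 0 + 1) rfl π0 (1 : Equiv.Perm (Fin 0))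
      (NC.nil π0) (NC.nil 1)
    rwa [recast_self] at this
  | cons h σ τ hσ hτ ihσ ihτ =>
    subst h
    rw [recast_rfl]
    intro π i hred
    rename_i k m
    have hnc : NC (k + m + 1) (assemble σ τ) := by
      have := NC.cons rfl σ τ hσ hτ
      rwa [recast_rfl] at this
    have hi := i.isLt
    rcases Nat.eq_zero_or_pos (i : ℕ) with hi0 | hipos
    · have hi' : i = ⟨0, Nat.succ_pos _⟩ := Fin.ext hi0
      rw [hi'] at hred
      have heq : π = assemble (assemble σ τ) (1 : Equiv.Perm (Fin 0)) :=
        unique1 hred (K0a (assemble σ τ))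
      subst heq
      have := NC.cons (k := k + m + 1) (m := 0) (n := (k + m + 1) + 1) rfl
        (assemble σ τ) (1 : Equiv.Perm (Fin 0)) hnc (NC.nil 1)
      rwa [recast_self] at this
    · rcases Nat.lt_or_ge (i : ℕ) (k + 2) with him | him
      · set j : Fin (k + 1) := ⟨(i : ℕ) - 1, by omega⟩ with hj
        have hncσ : NC (k + 1) (ins1 j σ) := ihσ (exists1 j σ)
        have hk1 := K1 τ (exists1 j σ)
        have hieq : i = ⟨1 + (j : ℕ), by have := j.isLt; omega⟩ :=
          Fin.ext (by simp only [hj, Fin.val_mk]; omega)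
        rw [hieq] at hred
        have heq := unique1 hred hk1
        subst heq
        exact NC.cons (by omega) (ins1 j σ) τ hncσ hτ
      · set j : Fin (m + 1) := ⟨(i : ℕ) - k - 1, by omega⟩ with hj
        have hj1 : 1 ≤ (j : ℕ) := by simp only [hj, Fin.val_mk]; omega
        have hncτ : NC (m + 1) (ins1 j τ) := ihτ (exists1 j τ)
        have hk3 := K3 σ (exists1 j τ) hj1
        have hieq : i = ⟨k + 1 + (j : ℕ), by have := j.isLt; omega⟩ :=
          Fin.ext (by simp only [hj, Fin.val_mk]; omega)
        rw [hieq] at hred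
        have heq := unique1 hred hk3
        subst heq
        exact NC.cons (by omega) σ (ins1 j τ) hσ hncτ

/-- `NC` is closed under un-doing a type-2 reduction -/
lemma nc_unred2 {n : ℕ} {π' : Equiv.Perm (Fin n)} (h : NC n π') :
    ∀ {π : Equiv.Perm (Fin (n + 1))} {i : Fin (n + 1)},
      IsType2Reduct π i π' → NC (n + 1) π := by
  induction h with
  | nil π0 =>
    intro π i hred
    exfalso
    have h1 := hred.1
    have h2 := (π i).isLt
    have h3 := i.isLt
    omega
  | cons h σ τ hσ hτ ihσ ihτ =>
    subst h
    rw [recast_rfl]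
    intro π i hred
    rename_i k m
    have hnc : NC (k + m + 1) (assemble σ τ) := by
      have := NC.cons rfl σ τ hσ hτ
      rwa [recast_rfl] at this
    have hilt : (i : ℕ) + 1 < (k + m + 1) + 1 := by
      have h1 := hred.1
      have h2 := (π i).isLt
      omega
    rcases Nat.eq_zero_or_pos (i : ℕ) with hi0 | hipos
    · have hi' : i = ⟨0, Nat.succ_pos _⟩ := Fin.ext hi0
      rw [hi'] at hred
      have hk0 := K0b (n := k + m) (assemble σ τ)
      have heq := unique2 hred hk0
      subst heq
      exact NC.cons (k := 0) (m := k + m + 1) (n := (k + m + 1) + 1) (by omega)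
        (1 : Equiv.Perm (Fin 0)) (assemble σ τ) (NC.nil 1) hnc
    · rcases Nat.lt_or_ge (i : ℕ) (k + 1) with him | him
      · set j : Fin k := ⟨(i : ℕ) - 1, by omega⟩ with hj
        have hncσ : NC (k + 1) (ins2 j σ) := ihσ (exists2 j σ)
        have hk2 := K2 τ (exists2 j σ)
        have hieq : i = ⟨1 + ((j.castSucc : Fin (k + 1)) : ℕ), by
            have := j.isLt; simp only [Fin.coe_castSucc]; omega⟩ :=
          Fin.ext (by simp only [Fin.val_mk, Fin.coe_castSucc, hj]; omega)
        rw [hieq] at hred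
        have heq := unique2 hred hk2
        subst heq
        exact NC.cons (by omega) (ins2 j σ) τ hncσ hτ
      · set j : Fin m := ⟨(i : ℕ) - k - 1, by omega⟩ with hj
        have hncτ : NC (m + 1) (ins2 j τ) := ihτ (exists2 j τ)
        have hk4 := K4 σ (exists2 j τ)
        have hieq : i = ⟨k + 1 + ((j.castSucc : Fin (m + 1)) : ℕ), by
            have := j.isLt; simp only [Fin.coe_castSucc]; omega⟩ :=
          Fin.ext (by simp only [Fin.val_mk, Fin.coe_castSucc, hj]; omega)
        rw [hieq] at hred
        have heq := unique2 hred hk4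
        subst heq
        exact NC.cons (by omega) σ (ins2 j τ) hσ hncτ

lemma reducible_iff_nc {n : ℕ} (π : Equiv.Perm (Fin n)) : Reducible n π ↔ NC n π := by
  constructor
  · intro h
    induction h with
    | empty π0 => exact NC.nil π0
    | step1 π i π' hred hπ' ih => exact nc_unred1 ih hred
    | step2 π i π' hred hπ' ih => exact nc_unred2 ih hred
  · exact nc_reducible


noncomputable def ncCount (n : ℕ) : ℕ := Nat.card {π : Equiv.Perm (Fin n) // NC n π}

lemma ncCount_zero : ncCount 0 = 1 := by
  rw [ncCount]
  have : Unique {π : Equiv.Perm (Fin 0) // NC 0 π} :=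
    ⟨⟨⟨1, NC.nil 1⟩⟩, fun x => Subtype.ext (Subsingleton.elim _ _)⟩
  exact Nat.card_unique

/-- the decomposition map -/
noncomputable def decMap (n : ℕ)
    (p : Σ i : Fin (n + 1), {σ : Equiv.Perm (Fin i) // NC i σ} ×
      {τ : Equiv.Perm (Fin (n - i)) // NC (n - i) τ}) :
    {π : Equiv.Perm (Fin (n + 1)) // NC (n + 1) π} :=
  ⟨recast (by have := p.1.isLt; omega) (assemble p.2.1.1 p.2.2.1),
    NC.cons _ _ _ p.2.1.2 p.2.2.2⟩

lemma decMap_bij (n : ℕ) : Function.Bijective (decMap n) := by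
  constructor
  · rintro ⟨i, ⟨σ, hσ⟩, ⟨τ, hτ⟩⟩ ⟨i', ⟨σ', hσ'⟩, ⟨τ', hτ'⟩⟩ hab
    have hi := i.isLt
    have hi' := i'.isLt
    have hv : ∀ x : Fin (n + 1),
        ((decMap n ⟨i, ⟨σ, hσ⟩, ⟨τ, hτ⟩⟩).1 x : ℕ) =
        ((decMap n ⟨i', ⟨σ', hσ'⟩, ⟨τ', hτ'⟩⟩).1 x : ℕ) := fun x => by rw [hab]
    simp only [decMap, recast_coe] at hv
    have hii : i = i' := by
      have h0 := hv ⟨0, by omega⟩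
      rw [assemble_coe_zero σ τ _ (by simp), assemble_coe_zero σ' τ' _ (by simp)] at h0
      apply Fin.ext
      split_ifs at h0 <;> omega
    subst hii
    have eσ : σ = σ' := by
      apply Equiv.ext; intro s
      have hs := s.isLt
      have hx := hv ⟨1 + (s : ℕ), by omega⟩
      rw [assemble_coe_mid σ τ s _ (by simp),
        assemble_coe_mid σ' τ' s _ (by simp)] at hx
      exact Fin.ext (by omega)
    subst eσ
    have eτ : τ = τ' := by
      apply Equiv.ext; intro t
      have ht := t.isLt
      have hx := hv ⟨(i : ℕ) + 1 + (t : ℕ), by omega⟩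
      rw [assemble_coe_right σ τ t _ (by simp),
        assemble_coe_right σ τ' t _ (by simp)] at hx
      apply Fin.ext
      split_ifs at hx <;> omega
    subst eτ
    rfl
  · rintro ⟨π, hπ⟩
    cases hπ with
    | cons h σ τ hσ hτ =>
      rename_i k m
      have hk : k ≤ n := by omega
      obtain rfl : m = n - k := by omega
      exact ⟨⟨⟨k, by omega⟩, ⟨σ, hσ⟩, ⟨τ, hτ⟩⟩, Subtype.ext rfl⟩

lemma ncCount_succ (n : ℕ) :
    ncCount (n + 1) = ∑ i : Fin (n + 1), ncCount (i : ℕ) * ncCount (n - (i : ℕ)) := by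
  classical
  have e := Equiv.ofBijective _ (decMap_bij n)
  rw [ncCount, ← Nat.card_congr e]
  letI : ∀ i : Fin (n + 1), Fintype {σ : Equiv.Perm (Fin i) // NC i σ} :=
    fun i => Fintype.ofFinite _
  letI : ∀ i : Fin (n + 1), Fintype {τ : Equiv.Perm (Fin (n - i)) // NC (n - i) τ} :=
    fun i => Fintype.ofFinite _
  rw [Nat.card_eq_fintype_card, Fintype.card_sigma]
  refine Finset.sum_congr rfl fun i _ => ?_
  rw [Fintype.card_prod, ncCount, ncCount, Nat.card_eq_fintype_card, Nat.card_eq_fintype_card]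

lemma ncCount_eq_catalan (n : ℕ) : ncCount n = catalan n := by
  induction n using Nat.strong_induction_on with
  | _ n ih =>
    match n, ih with
    | 0, _ => rw [ncCount_zero, catalan_zero]
    | (n + 1), ih =>
      rw [ncCount_succ, catalan_succ]
      refine Finset.sum_congr rfl fun i _ => ?_
      have hi := i.isLt
      rw [ih i (by omega), ih (n - (i : ℕ)) (by omega)]

lemma cat_eq_catalan (n : ℕ) : cat n = catalan n := by
  have hc : (n + 1) * catalan n = n.centralBinom := succ_mul_catalan_eq_centralBinom n
  have hb : n.centralBinom * n.factorial * n.factorial = (2 * n).factorial := by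
    have h2 := Nat.choose_mul_factorial_mul_factorial (by omega : n ≤ 2 * n)
    have h3 : 2 * n - n = n := by omega
    rw [h3] at h2
    rw [Nat.centralBinom]
    exact h2
  have key : (2 * n).factorial = catalan n * (n.factorial * (n + 1).factorial) := by
    rw [Nat.factorial_succ, ← hb, ← hc]
    ring
  rw [cat, key, Nat.mul_div_cancel _ (Nat.mul_pos n.factorial_pos (n + 1).factorial_pos)]

end CatProof

/-- For `n ≥ 1`, exactly `C_n` permutations of `{1,...,n}` can be reduced to the empty
permutation by reductions of type 1 and type 2. -/


theorem card_reducible (n : ℕ) (hn : 1 ≤ n) :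
    Nat.card {π : Equiv.Perm (Fin n) // Reducible n π} = cat n := by
  have h1 : Nat.card {π : Equiv.Perm (Fin n) // Reducible n π} = CatProof.ncCount n :=
    Nat.card_congr (Equiv.subtypeEquivRight fun π => CatProof.reducible_iff_nc π)
  rw [h1, CatProof.ncCount_eq_catalan, ← CatProof.cat_eq_catalan]
end
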